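/- arXiv:2108.00503 — 4 statements merged into one kernel-verified Lean document; each statement's English description precedes it below -/
import Mathlib

section
/- If X is a random variable with the gamma distribution with shape k > 0 and scale λ > 0, then for every t ≥ 0, the CDF satisfies F(t) = E[((1-k)/X + 1/λ) · min(X, t)]. -/
open MeasureTheory ProbabilityTheory Real Set Filter Topology Asymptotics
open scoped ENNReal NNReal

lemma gfp_aux_deriv {b : ℝ} (p : ℝ) {x : ℝ} (hx : x ≠ 0) :
    HasDerivAt (fun y : ℝ => y ^ p * Real.exp (-(b * y)))
      (p * x ^ (p - 1) * Real.exp (-(b * x)) - b * (x ^ p * Real.exp (-(b * x)))) x := by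
  have h1 : HasDerivAt (fun y : ℝ => y ^ p) (p * x ^ (p - 1)) x :=
    Real.hasDerivAt_rpow_const (Or.inl hx)
  have h0 : HasDerivAt (fun y : ℝ => -(b * y)) (-b) x := by
    have h := ((hasDerivAt_id x).const_mul b).neg; simp only [mul_one] at h; exact h
  have h2 := h0.exp
  have := h1.mul h2
  refine this.congr_deriv ?_
  ring

lemma gfp_cont_aux {b p t : ℝ} {x : ℝ} (hx : x ≠ 0 ∨ 0 ≤ p) :
    ContinuousAt (fun y : ℝ => y ^ p * Real.exp (-(b * y))) x := by
  exact (Real.continuousAt_rpow_const x p hx).mul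
    (Real.continuous_exp.comp ((continuous_const.mul continuous_id).neg)).continuousAt

lemma gfp_int_Ioi {b t : ℝ} (s : ℝ) (hb : 0 < b) (ht : 0 < t) :
    IntegrableOn (fun x : ℝ => x ^ s * Real.exp (-(b * x))) (Ioi t) := by
  apply integrable_of_isBigO_exp_neg (half_pos hb)
  · intro x hx
    have hx0 : x ≠ 0 := (lt_of_lt_of_le ht hx).ne'
    exact (gfp_cont_aux (t := t) (Or.inl hx0)).continuousWithinAt
  · have h0 : Tendsto (fun x : ℝ => x ^ s * Real.exp (-(b / 2) * x)) atTop (𝓝 0) :=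
      tendsto_rpow_mul_exp_neg_mul_atTop_nhds_zero s (b / 2) (half_pos hb)
    have h1 : (fun x : ℝ => x ^ s * Real.exp (-(b / 2) * x)) =O[atTop] (fun _ : ℝ => (1 : ℝ)) :=
      h0.isBigO_one ℝ
    have h2 := h1.mul (isBigO_refl (fun x : ℝ => Real.exp (-(b / 2) * x)) atTop)
    refine h2.congr (fun x => ?_) (fun x => one_mul _)
    rw [mul_assoc, ← Real.exp_add]
    ring_nf

lemma gfp_int_Ioc {b t : ℝ} (s : ℝ) (hs : -1 < s) (hb : 0 < b) :
    IntegrableOn (fun x : ℝ => x ^ s * Real.exp (-(b * x))) (Ioc 0 t) := by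
  rcases le_or_gt t 0 with h | h
  · rw [Set.Ioc_eq_empty (not_lt.mpr h)]
    simp
  have hbase : IntegrableOn (fun x : ℝ => x ^ s) (Ioc 0 t) := by
    have := intervalIntegral.intervalIntegrable_rpow' (a := 0) (b := t) hs
    rwa [intervalIntegrable_iff_integrableOn_Ioc_of_le h.le] at this
  refine hbase.mono' ?_ ?_
  · apply Measurable.aestronglyMeasurable
    fun_prop
  · filter_upwards [ae_restrict_mem measurableSet_Ioc] with x hx
    have hx0 : (0:ℝ) < x := hx.1
    have h1 : Real.exp (-(b * x)) ≤ 1 := by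
      apply Real.exp_le_one_iff.mpr
      nlinarith
    have h2 : (0:ℝ) ≤ x ^ s := (Real.rpow_pos_of_pos hx0 s).le
    rw [norm_mul, Real.norm_eq_abs, Real.norm_eq_abs, abs_of_nonneg h2,
      abs_of_nonneg (Real.exp_pos _).le]
    nlinarith [Real.exp_pos (-(b * x))]

lemma gfp_ftc_Ioc {k r t : ℝ} (hk : 0 < k) (hr : 0 < r) (ht : 0 < t) :
    ∫ x in Ioc 0 t, x ^ (k - 1) * Real.exp (-(r * x)) * (k - r * x) =
      t ^ k * Real.exp (-(r * t)) := by
  set f' : ℝ → ℝ := fun x => x ^ (k - 1) * Real.exp (-(r * x)) * (k - r * x) with hf'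
  have hint : IntegrableOn f' (Ioc 0 t) := by
    have h1 := (gfp_int_Ioc (k - 1) (by linarith) hr (t := t)).const_mul k
    have h2 := (gfp_int_Ioc k (by linarith) hr (t := t)).const_mul r
    have h12 : IntegrableOn
        (fun x : ℝ => k * (x ^ (k - 1) * Real.exp (-(r * x))) - r * (x ^ k * Real.exp (-(r * x))))
        (Ioc 0 t) := h1.sub h2
    refine h12.congr_fun (fun x hx => ?_) measurableSet_Ioc
    have hx0 : x ≠ 0 := hx.1.ne'
    have hxk : x ^ k = x ^ (k - 1) * x := by
      nth_rewrite 1 [show k = k - 1 + 1 by ring]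
      rw [Real.rpow_add_one hx0]
    simp only [hf', hxk]
    ring
  have hcont : ContinuousOn (fun x : ℝ => x ^ k * Real.exp (-(r * x))) (Icc 0 t) :=
    fun x _ => (gfp_cont_aux (t := t) (Or.inr hk.le)).continuousWithinAt
  have hderiv : ∀ x ∈ Ioo 0 t,
      HasDerivWithinAt (fun x : ℝ => x ^ k * Real.exp (-(r * x))) (f' x) (Ioi x) x := by
    intro x hx
    have := gfp_aux_deriv (b := r) k hx.1.ne'
    have heq : f' x = k * x ^ (k - 1) * Real.exp (-(r * x)) - r * (x ^ k * Real.exp (-(r * x))) := by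
      have hxk : x ^ k = x ^ (k - 1) * x := by
        nth_rewrite 1 [show k = k - 1 + 1 by ring]
        rw [Real.rpow_add_one hx.1.ne']
      simp only [hf', hxk]
      ring
    rw [heq]
    exact this.hasDerivWithinAt
  have := intervalIntegral.integral_eq_sub_of_hasDeriv_right_of_le ht.le hcont hderiv
    ((intervalIntegrable_iff_integrableOn_Ioc_of_le ht.le).mpr hint)
  rw [intervalIntegral.integral_of_le ht.le] at this
  rw [this, Real.zero_rpow hk.ne']
  simp

lemma gfp_ftc_Ioi {k r t : ℝ} (hr : 0 < r) (ht : 0 < t) :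
    ∫ x in Ioi t, ((1 - k) * x ^ (k - 2) + r * x ^ (k - 1)) * Real.exp (-(r * x)) =
      t ^ (k - 1) * Real.exp (-(r * t)) := by
  set f : ℝ → ℝ := fun y => -(y ^ (k - 1) * Real.exp (-(r * y))) with hf
  set f' : ℝ → ℝ := fun x => ((1 - k) * x ^ (k - 2) + r * x ^ (k - 1)) * Real.exp (-(r * x))
    with hf'
  have hcont : ContinuousWithinAt f (Ici t) t :=
    ((gfp_cont_aux (t := t) (p := k - 1) (b := r) (Or.inl ht.ne')).neg).continuousWithinAt
  have hderiv : ∀ x ∈ Ioi t, HasDerivAt f (f' x) x := by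
    intro x hx
    have hx0 : x ≠ 0 := (lt_trans ht hx).ne'
    have := (gfp_aux_deriv (b := r) (k - 1) hx0).neg
    refine this.congr_deriv ?_
    have h21 : k - 1 - 1 = k - 2 := by ring
    simp only [hf', ← h21]
    ring
  have hint : IntegrableOn f' (Ioi t) := by
    have h1 := (gfp_int_Ioi (k - 2) hr ht).const_mul (1 - k)
    have h2 := (gfp_int_Ioi (k - 1) hr ht).const_mul r
    have h12 : IntegrableOn
        (fun x : ℝ => (1 - k) * (x ^ (k - 2) * Real.exp (-(r * x))) +
          r * (x ^ (k - 1) * Real.exp (-(r * x)))) (Ioi t) := h1.add h2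
    refine h12.congr_fun (fun x _ => ?_) measurableSet_Ioi
    simp only [hf']
    ring
  have htend : Tendsto f atTop (𝓝 0) := by
    have := (tendsto_rpow_mul_exp_neg_mul_atTop_nhds_zero (k - 1) r hr).neg
    rw [neg_zero] at this
    refine this.congr (fun x => ?_)
    simp [hf, neg_mul]
  have := MeasureTheory.integral_Ioi_of_hasDerivAt_of_tendsto hcont hderiv hint htend
  rw [this]
  simp [hf]

/-- If X has the gamma distribution with shape k > 0 and scale λ > 0 (i.e. rate λ⁻¹),
then for every t ≥ 0 the CDF satisfies F(t) = E[((1-k)/X + 1/λ) · min(X, t)]. -/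
theorem gamma_fixed_point_identity
    {Ω : Type*} [MeasurableSpace Ω] (μ : Measure Ω) [IsProbabilityMeasure μ]
    (k lam : ℝ) (hk : 0 < k) (hlam : 0 < lam)
    (X : Ω → ℝ) (hX : Measurable X)
    (hgamma : Measure.map X μ = gammaMeasure k lam⁻¹) :
    ∀ t : ℝ, 0 ≤ t →
      (μ {ω | X ω ≤ t}).toReal =
        ∫ ω, ((1 - k) / X ω + 1 / lam) * min (X ω) t ∂μ := by
  intro t ht
  have hr : 0 < lam⁻¹ := inv_pos.mpr hlam
  set r : ℝ := lam⁻¹ with hrdef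
  set c : ℝ := r ^ k / Real.Gamma k with hcdef
  have hΓ : 0 < Real.Gamma k := Real.Gamma_pos_of_pos hk
  have hc : 0 < c := div_pos (Real.rpow_pos_of_pos hr k) hΓ
  have : IsProbabilityMeasure (gammaMeasure k r) := isProbabilityMeasure_gammaMeasure hk hr
  set g : ℝ → ℝ := fun x => ((1 - k) / x + 1 / lam) * min x t with hgdef
  have hgm : Measurable g := by
    apply Measurable.mul
    · exact (measurable_const.div measurable_id).add measurable_const
    · exact measurable_id.min measurable_const
  -- LHS
  have hLHS : (μ {ω | X ω ≤ t}).toReal = ∫ x in Iic t, gammaPDFReal k r x := by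
    have h0 : {ω | X ω ≤ t} = X ⁻¹' (Iic t) := rfl
    rw [h0, ← Measure.map_apply hX measurableSet_Iic, hgamma]
    have h1 : (gammaMeasure k r (Iic t)).toReal = cdf (gammaMeasure k r) t :=
      (cdf_eq_real (gammaMeasure k r) t).symm
    rw [h1, cdf_gammaMeasure_eq_integral hk hr t]
  -- RHS
  have hRHS : ∫ ω, ((1 - k) / X ω + 1 / lam) * min (X ω) t ∂μ =
      ∫ x, gammaPDFReal k r x * g x := by
    calc ∫ ω, ((1 - k) / X ω + 1 / lam) * min (X ω) t ∂μ
        = ∫ x, g x ∂(Measure.map X μ) :=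
          (integral_map hX.aemeasurable hgm.aestronglyMeasurable).symm
      _ = ∫ x, g x ∂(gammaMeasure k r) := by rw [hgamma]
      _ = ∫ x, gammaPDFReal k r x * g x := by
          rw [gammaMeasure]
          have hd : gammaPDF k r = fun x => ((Real.toNNReal (gammaPDFReal k r x) : ℝ≥0) : ℝ≥0∞) :=
            rfl
          rw [hd, integral_withDensity_eq_integral_smul
            ((measurable_gammaPDFReal k r).real_toNNReal) g]
          refine integral_congr_ae (Filter.Eventually.of_forall fun x => ?_)
          simp [NNReal.smul_def, Real.coe_toNNReal _ (gammaPDFReal_nonneg hk hr x)]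
  rw [hLHS, hRHS]
  -- restrict RHS to Ioi 0
  have hsupp : ∀ x ∉ Ioi (0:ℝ), gammaPDFReal k r x * g x = 0 := by
    intro x hx
    rw [mem_Ioi, not_lt] at hx
    rcases lt_or_eq_of_le hx with hx' | hx'
    · rw [gammaPDFReal, if_neg (not_le.mpr hx'), zero_mul]
    · subst hx'
      have : min (0:ℝ) t = 0 := min_eq_left ht
      simp [hgdef, this]
  rw [← setIntegral_eq_integral_of_forall_compl_eq_zero hsupp]
  -- pdf integral on Iic 0 vanishes
  have hne : ∀ᵐ x : ℝ ∂volume, x ≠ 0 := by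
    rw [Filter.Eventually]
    rw [mem_ae_iff]
    simpa using Real.volume_singleton (a := 0)
  have hLzero : ∫ x in Iic (0:ℝ), gammaPDFReal k r x = 0 := by
    refine integral_eq_zero_of_ae ?_
    filter_upwards [ae_restrict_mem measurableSet_Iic, ae_restrict_of_ae hne] with x h1 h2
    exact if_neg (not_le.mpr (lt_of_le_of_ne h1 h2))
  have hIic0 : IntegrableOn (gammaPDFReal k r) (Iic 0) := by
    refine (integrable_zero _ _ _).congr ?_
    filter_upwards [ae_restrict_mem measurableSet_Iic, ae_restrict_of_ae hne] with x h1 h2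
    exact (if_neg (not_le.mpr (lt_of_le_of_ne h1 h2))).symm
  have hpdfInt : IntegrableOn (gammaPDFReal k r) (Ioc 0 t) := by
    have h0 : IntegrableOn (fun x : ℝ => c * (x ^ (k - 1) * Real.exp (-(r * x)))) (Ioc 0 t) :=
      (gfp_int_Ioc (k - 1) (by linarith) hr (t := t)).const_mul c
    refine h0.congr_fun (fun x hx => ?_) measurableSet_Ioc
    simp only [gammaPDFReal, if_pos hx.1.le, hcdef]
    ring
  have hsplitL : ∫ x in Iic t, gammaPDFReal k r x = ∫ x in Ioc 0 t, gammaPDFReal k r x := by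
    rw [← Iic_union_Ioc_eq_Iic ht,
      setIntegral_union (Iic_disjoint_Ioc le_rfl) measurableSet_Ioc hIic0 hpdfInt, hLzero,
      zero_add]
  rw [hsplitL]
  rcases eq_or_lt_of_le ht with rfl | htpos
  · -- t = 0
    have hz : ∫ x in Ioi (0:ℝ), gammaPDFReal k lam⁻¹ x * g x = ∫ _ in Ioi (0:ℝ), (0:ℝ) :=
      setIntegral_congr_fun measurableSet_Ioi
        (fun x hx => by simp [hgdef, min_eq_right (le_of_lt (mem_Ioi.mp hx))])
    rw [← hrdef] at hz
    simp [hz]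
  · -- t > 0
    rw [← Ioc_union_Ioi_eq_Ioi htpos.le]
    -- integrability on pieces
    have hderInt : IntegrableOn
        (fun x => c * (x ^ (k - 1) * Real.exp (-(r * x)) * (k - r * x))) (Ioc 0 t) := by
      have h1 := (gfp_int_Ioc (k - 1) (by linarith) hr (t := t)).const_mul (c * k)
      have h2 := (gfp_int_Ioc k (by linarith) hr (t := t)).const_mul (c * r)
      have h12 : IntegrableOn
          (fun x : ℝ => c * k * (x ^ (k - 1) * Real.exp (-(r * x))) -
            c * r * (x ^ k * Real.exp (-(r * x)))) (Ioc 0 t) := h1.sub h2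
      refine h12.congr_fun (fun x hx => ?_) measurableSet_Ioc
      have hxk : x ^ k = x ^ (k - 1) * x := by
        nth_rewrite 1 [show k = k - 1 + 1 by ring]
        rw [Real.rpow_add_one hx.1.ne']
      dsimp only; rw [hxk]; ring
    have hEq1 : EqOn (fun x => gammaPDFReal k r x - c * (x ^ (k - 1) * Real.exp (-(r * x)) * (k - r * x)))
        (fun x => gammaPDFReal k r x * g x) (Ioc 0 t) := by
      intro x hx
      have hx0 : (0:ℝ) < x := hx.1
      simp only [hgdef, gammaPDFReal, if_pos hx0.le, min_eq_left hx.2, ← hcdef]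
      have h1lam : 1 / lam = r := by rw [hrdef, one_div]
      rw [h1lam]
      field_simp
      ring
    have hsub : IntegrableOn
        (fun x => gammaPDFReal k r x - c * (x ^ (k - 1) * Real.exp (-(r * x)) * (k - r * x)))
        (Ioc 0 t) := hpdfInt.sub hderInt
    have hInt1 : IntegrableOn (fun x => gammaPDFReal k r x * g x) (Ioc 0 t) :=
      hsub.congr_fun hEq1 measurableSet_Ioc
    have hEq2 : EqOn (fun x => c * t * (((1 - k) * x ^ (k - 2) + r * x ^ (k - 1)) * Real.exp (-(r * x))))
        (fun x => gammaPDFReal k r x * g x) (Ioi t) := by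
      intro x hx
      have hx0 : (0:ℝ) < x := lt_trans htpos hx
      simp only [hgdef, gammaPDFReal, if_pos hx0.le, min_eq_right (le_of_lt (mem_Ioi.mp hx)), ← hcdef]
      have h1lam : 1 / lam = r := by rw [hrdef, one_div]
      rw [h1lam]
      have hxk : x ^ (k - 1) = x ^ (k - 2) * x := by
        nth_rewrite 1 [show k - 1 = k - 2 + 1 by ring]
        rw [Real.rpow_add_one hx0.ne']
      rw [hxk]
      field_simp
    have hInt2 : IntegrableOn (fun x => gammaPDFReal k r x * g x) (Ioi t) := by
      have h1 := (gfp_int_Ioi (k - 2) hr htpos).const_mul (c * t * (1 - k))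
      have h2 := (gfp_int_Ioi (k - 1) hr htpos).const_mul (c * t * r)
      have h12 : IntegrableOn
          (fun x : ℝ => c * t * (1 - k) * (x ^ (k - 2) * Real.exp (-(r * x))) +
            c * t * r * (x ^ (k - 1) * Real.exp (-(r * x)))) (Ioi t) := h1.add h2
      refine (h12.congr_fun (fun x _ => by ring) measurableSet_Ioi).congr_fun hEq2
        measurableSet_Ioi
    rw [setIntegral_union (Ioc_disjoint_Ioi le_rfl) measurableSet_Ioi hInt1 hInt2]
    -- compute the two pieces
    have e0 : ∫ x in Ioc 0 t, (gammaPDFReal k r x - c * (x ^ (k - 1) * Real.exp (-(r * x)) * (k - r * x)))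
        = ∫ x in Ioc 0 t, gammaPDFReal k r x * g x :=
      setIntegral_congr_fun measurableSet_Ioc hEq1
    rw [integral_sub hpdfInt hderInt] at e0
    have eA : ∫ x in Ioc 0 t, c * (x ^ (k - 1) * Real.exp (-(r * x)) * (k - r * x))
        = c * (t ^ k * Real.exp (-(r * t))) := by
      rw [integral_const_mul, gfp_ftc_Ioc hk hr htpos]
    have eB : ∫ x in Ioi t, gammaPDFReal k r x * g x = c * (t ^ k * Real.exp (-(r * t))) := by
      rw [← setIntegral_congr_fun measurableSet_Ioi hEq2, integral_const_mul,
        gfp_ftc_Ioi hr htpos]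
      have hkk : t ^ k = t ^ (k - 1) * t := by
        nth_rewrite 1 [show k = k - 1 + 1 by ring]
        rw [Real.rpow_add_one htpos.ne']
      rw [hkk]; ring
    rw [eB, ← e0, eA]
    ring
end

section
/- Conversely, if X is a positive random variable with CDF F satisfying F(t) = E[((1-k)/X + 1/λ) · min(X, t)] for all t ≥ 0, and the expectations involved are finite, then X has the gamma distribution with shape k and scale λ. -/
open MeasureTheory ProbabilityTheory Set Filter
open scoped ENNReal NNReal Topology


lemma ae_pos_of_Iic (ν : Measure ℝ) (hν0 : ν (Iic 0) = 0) : ∀ᵐ x ∂ν, 0 < x := by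
  rw [ae_iff]
  convert hν0 using 2
  ext x; simp [not_lt]

lemma vol_inter (x t : ℝ) (hx : 0 < x) (ht : 0 ≤ t) :
    volume (Iio x ∩ Ioc 0 t) = ENNReal.ofReal (min x t) := by
  rcases le_or_gt x t with h | h
  · have he : Iio x ∩ Ioc 0 t = Ioo 0 x := by
      ext y
      simp only [mem_inter_iff, mem_Iio, mem_Ioc, mem_Ioo]
      exact ⟨fun ⟨h1, h2, _⟩ => ⟨h2, h1⟩, fun ⟨h1, h2⟩ => ⟨h2, h1, h2.le.trans h⟩⟩
    rw [he, Real.volume_Ioo, min_eq_left h, sub_zero]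
  · have he : Iio x ∩ Ioc 0 t = Ioc 0 t := by
      ext y
      simp only [mem_inter_iff, mem_Iio, mem_Ioc]
      exact ⟨fun ⟨_, h2⟩ => h2, fun h2 => ⟨h2.2.trans_lt h, h2⟩⟩
    rw [he, Real.volume_Ioc, min_eq_right h.le, sub_zero]

lemma layercake (ν : Measure ℝ) [IsFiniteMeasure ν] (hν0 : ν (Iic 0) = 0)
    (c : ℝ → ℝ) (hc : Measurable c) (hc0 : ∀ x, 0 < x → 0 ≤ c x)
    (hci : Integrable c ν) (t : ℝ) (ht : 0 ≤ t) :
    ∫ x, c x * min x t ∂ν = ∫ s in Ioc 0 t, (∫ x in Ioi s, c x ∂ν) := by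
  have ae_pos := ae_pos_of_Iic ν hν0
  have ae_nn : ∀ᵐ x ∂ν, 0 ≤ c x := by
    filter_upwards [ae_pos] with x hx using hc0 x hx
  set F : ℝ → ℝ≥0∞ := fun s => ∫⁻ x in Ioi s, ENNReal.ofReal (c x) ∂ν with hF
  have hFanti : Antitone F := fun a b hab =>
    lintegral_mono_set (Ioi_subset_Ioi hab)
  have hctop : (∫⁻ x, ENNReal.ofReal (c x) ∂ν) < ⊤ :=
    (lintegral_ofReal_le_lintegral_enorm c).trans_lt hci.2
  have hFlt : ∀ s, F s < ⊤ := fun s =>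
    (setLIntegral_le_lintegral _ _).trans_lt hctop
  -- step 2 : LHS as lintegral
  have h2 : ∫ x, c x * min x t ∂ν
      = (∫⁻ x, ENNReal.ofReal (c x * min x t) ∂ν).toReal := by
    rw [integral_eq_lintegral_of_nonneg_ae]
    · filter_upwards [ae_pos] with x hx
      exact mul_nonneg (hc0 x hx) (le_min hx.le ht)
    · exact (hc.mul (measurable_id.min measurable_const)).aestronglyMeasurable
  -- step 3 : swap
  have h3 : ∫⁻ x, ENNReal.ofReal (c x * min x t) ∂ν
      = ∫⁻ s in Ioc 0 t, F s ∂volume := by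
    have key : ∀ᵐ x ∂ν, ENNReal.ofReal (c x * min x t)
        = ∫⁻ s in Ioc 0 t, (Ioi s).indicator (fun _ => (1:ℝ≥0∞)) x * ENNReal.ofReal (c x) ∂volume := by
      filter_upwards [ae_pos] with x hx
      have hswap : ∀ s : ℝ, (Ioi s).indicator (fun _ => (1:ℝ≥0∞)) x * ENNReal.ofReal (c x)
          = (Iio x).indicator (fun _ => ENNReal.ofReal (c x)) s := by
        intro s
        by_cases h : s < x <;> simp [Set.indicator_apply, h, mem_Ioi, mem_Iio]
      simp_rw [hswap]
      rw [lintegral_indicator measurableSet_Iio, Measure.restrict_restrict measurableSet_Iio,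
        lintegral_const, Measure.restrict_apply_univ, vol_inter x t hx ht,
        ENNReal.ofReal_mul (hc0 x hx), mul_comm]
    rw [lintegral_congr_ae key]
    rw [lintegral_lintegral_swap]
    · refine setLIntegral_congr_fun measurableSet_Ioc (fun s _ => ?_)
      rw [hF]
      simp only
      rw [← lintegral_indicator measurableSet_Ioi]
      congr 1
      ext x
      by_cases h : x ∈ Ioi s <;> simp [Set.indicator_apply, h]
    · apply AEMeasurable.mul
      · apply Measurable.aemeasurable
        have : (fun (p : ℝ × ℝ) => (Ioi p.2).indicator (fun _ => (1:ℝ≥0∞)) p.1)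
            = {p : ℝ × ℝ | p.2 < p.1}.indicator (fun _ => (1:ℝ≥0∞)) := by
          ext p
          by_cases h : p.2 < p.1 <;> simp [Set.indicator_apply, h, mem_Ioi]
        exact this ▸ (measurable_const.indicator (measurableSet_lt measurable_snd measurable_fst))
      · exact ((ENNReal.measurable_ofReal.comp hc).comp measurable_fst).aemeasurable
  -- step 4 : RHS as lintegral
  have h4 : ∫ s in Ioc 0 t, (∫ x in Ioi s, c x ∂ν)
      = (∫⁻ s in Ioc 0 t, F s ∂volume).toReal := by
    have hmeas : AEStronglyMeasurable (fun s => ∫ x in Ioi s, c x ∂ν) (volume.restrict (Ioc 0 t)) := by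
      have : Antitone (fun s => ∫ x in Ioi s, c x ∂ν) := by
        intro a b hab
        apply setIntegral_mono_set hci.integrableOn (ae_restrict_of_ae ae_nn)
          (HasSubset.Subset.eventuallyLE (Ioi_subset_Ioi hab))
      exact (this.measurable).aestronglyMeasurable
    rw [integral_eq_lintegral_of_nonneg_ae _ hmeas]
    · congr 1
      refine setLIntegral_congr_fun measurableSet_Ioc (fun s hs => ?_)
      rw [hF]
      exact ofReal_integral_eq_lintegral_ofReal hci.integrableOn (ae_restrict_of_ae ae_nn)
    · exact ae_of_all _ fun s => integral_nonneg_of_ae (ae_restrict_of_ae ae_nn)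
  rw [h2, h3, h4]


lemma cont_tail (ν : Measure ℝ) (h : ℝ → ℝ) (hm : Measurable h)
    (hi : Integrable h ν) (hatom : ∀ s : ℝ, ν {s} = 0) :
    Continuous fun s => ∫ x in Ioi s, h x ∂ν := by
  rw [continuous_iff_continuousAt]
  intro s₀
  have hrepr : ∀ s : ℝ, ∫ x in Ioi s, h x ∂ν = ∫ x, (Ioi s).indicator h x ∂ν := fun s =>
    (integral_indicator measurableSet_Ioi).symm
  unfold ContinuousAt
  simp_rw [hrepr]
  apply tendsto_integral_filter_of_dominated_convergence (fun x => ‖h x‖)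
  · exact Eventually.of_forall fun s => (hm.indicator measurableSet_Ioi).aestronglyMeasurable
  · exact Eventually.of_forall fun s => ae_of_all _ fun x => norm_indicator_le_norm_self _ _
  · exact hi.norm
  · have hne : ∀ᵐ x ∂ν, x ≠ s₀ := by
      rw [ae_iff]
      simpa using hatom s₀
    filter_upwards [hne] with x hx
    rcases lt_or_gt_of_ne hx with hlt | hgt
    · have hev : (fun s => (Ioi s).indicator h x) =ᶠ[𝓝 s₀] fun _ => (Ioi s₀).indicator h x := by
        filter_upwards [eventually_gt_nhds hlt] with s hs
        rw [indicator_of_notMem (by simpa using hs.le), indicator_of_notMem (by simpa using hlt.le)]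
      exact tendsto_const_nhds.congr' hev.symm
    · have hev : (fun s => (Ioi s).indicator h x) =ᶠ[𝓝 s₀] fun _ => (Ioi s₀).indicator h x := by
        filter_upwards [eventually_lt_nhds hgt] with s hs
        rw [indicator_of_mem (by simpa using hs), indicator_of_mem (by simpa using hgt)]
      exact tendsto_const_nhds.congr' hev.symm

theorem main_nu (ν : Measure ℝ) [IsProbabilityMeasure ν] (k lam : ℝ) (hk : 0 < k) (hlam : 0 < lam)
    (hν0 : ν (Iic 0) = 0) (hint1 : Integrable (fun x => x) ν)
    (hint2 : Integrable (fun x => x⁻¹) ν)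
    (hfix : ∀ t, 0 ≤ t → (ν (Iic t)).toReal = ∫ x, ((1-k)/x + 1/lam) * min x t ∂ν) :
    ν = gammaMeasure k lam⁻¹ := by
  have ae_pos := ae_pos_of_Iic ν hν0
  have ae_invnn : ∀ᵐ x ∂ν, 0 ≤ x⁻¹ := by
    filter_upwards [ae_pos] with x hx using (inv_pos.2 hx).le
  set u : ℝ → ℝ := fun s => ∫ x in Ioi s, x⁻¹ ∂ν with hu
  set p : ℝ → ℝ := fun s => (ν (Ioi s)).toReal with hp
  set G : ℝ → ℝ := fun s => (1 - k) * u s + (1/lam) * p s with hG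
  set F : ℝ → ℝ := fun t => (ν (Iic t)).toReal with hFdef
  -- basic properties
  have hu_anti : Antitone u := fun a b hab =>
    setIntegral_mono_set hint2.integrableOn (ae_restrict_of_ae ae_invnn)
      (HasSubset.Subset.eventuallyLE (Ioi_subset_Ioi hab))
  have hp_anti : Antitone p := fun a b hab =>
    ENNReal.toReal_mono (measure_ne_top ν _) (measure_mono (Ioi_subset_Ioi hab))
  have hu_nn : ∀ s, 0 ≤ u s := fun s =>
    integral_nonneg_of_ae (ae_restrict_of_ae ae_invnn)
  have hp_nn : ∀ s, 0 ≤ p s := fun s => ENNReal.toReal_nonneg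
  have hu_bdd : ∀ s, u s ≤ ∫ x, ‖x⁻¹‖ ∂ν := fun s =>
    ((le_abs_self (u s)).trans (Real.norm_eq_abs (u s)).symm.le |>.trans (norm_integral_le_integral_norm _))
      |>.trans (setIntegral_le_integral hint2.norm (ae_of_all _ fun x => norm_nonneg _))
  have hp_bdd : ∀ s, p s ≤ 1 := fun s => by
    rw [hp]
    exact ENNReal.toReal_le_of_le_ofReal one_pos.le (by simpa using (prob_le_one (μ := ν) (s := Ioi s)))
  have hG_meas : Measurable G :=
    ((measurable_const.mul hu_anti.measurable).add (measurable_const.mul hp_anti.measurable))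
  have hG_bdd : ∀ s, |G s| ≤ |1-k| * (∫ x, ‖x⁻¹‖ ∂ν) + (1/lam) := by
    intro s
    refine (abs_add_le _ _).trans (add_le_add ?_ ?_)
    · rw [abs_mul]
      exact mul_le_mul_of_nonneg_left
        ((abs_of_nonneg (hu_nn s)).le.trans (hu_bdd s)) (abs_nonneg _)
    · rw [abs_mul, abs_of_pos (by positivity : (0:ℝ) < 1/lam),
        abs_of_nonneg (hp_nn s)]
      exact mul_le_of_le_one_right (by positivity) (hp_bdd s)
  have hG_int : ∀ t : ℝ, IntegrableOn G (Ioc 0 t) volume := by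
    intro t
    refine Integrable.mono' (integrable_const (|1-k| * (∫ x, ‖x⁻¹‖ ∂ν) + (1/lam)))
      hG_meas.aestronglyMeasurable (ae_of_all _ fun s => ?_)
    exact (Real.norm_eq_abs _) ▸ hG_bdd s
  -- the fixed point identity in terms of G
  have hFeq : ∀ t, 0 ≤ t → F t = ∫ s in Ioc 0 t, G s := by
    intro t ht
    have I1 : Integrable (fun x => x⁻¹ * min x t) ν := by
      refine Integrable.mono' (integrable_const 1)
        ((measurable_inv.mul (measurable_id.min measurable_const)).aestronglyMeasurable)
        ?_
      filter_upwards [ae_pos] with x hx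
      rw [Real.norm_eq_abs, abs_of_nonneg (mul_nonneg (inv_pos.2 hx).le (le_min hx.le ht))]
      calc x⁻¹ * min x t ≤ x⁻¹ * x := by
            exact mul_le_mul_of_nonneg_left (min_le_left _ _) (inv_pos.2 hx).le
        _ = 1 := inv_mul_cancel₀ hx.ne'
    have I2 : Integrable (fun x => min x t) ν := by
      refine Integrable.mono' (integrable_const t)
        ((measurable_id.min measurable_const).aestronglyMeasurable) ?_
      filter_upwards [ae_pos] with x hx
      rw [Real.norm_eq_abs, abs_of_nonneg (le_min hx.le ht)]
      exact min_le_right _ _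
    have split : ∫ x, ((1-k)/x + 1/lam) * min x t ∂ν
        = (1-k) * ∫ x, x⁻¹ * min x t ∂ν + (1/lam) * ∫ x, min x t ∂ν := by
      rw [← integral_const_mul, ← integral_const_mul, ← integral_add (I1.const_mul _) (I2.const_mul _)]
      congr 1
      ext x
      rw [div_eq_mul_inv]
      ring
    have L1 : ∫ x, x⁻¹ * min x t ∂ν = ∫ s in Ioc 0 t, u s :=
      layercake ν hν0 _ measurable_inv (fun x hx => (inv_pos.2 hx).le) hint2 t ht
    have L2 : ∫ x, min x t ∂ν = ∫ s in Ioc 0 t, p s := by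
      have := layercake ν hν0 (fun _ => (1:ℝ)) measurable_const (fun _ _ => zero_le_one)
        (integrable_const 1) t ht
      simp only [one_mul] at this
      rw [this]
      refine setIntegral_congr_fun measurableSet_Ioc fun s _ => ?_
      rw [setIntegral_const, smul_eq_mul, mul_one, measureReal_def, hp]
    have hu_int : IntegrableOn u (Ioc 0 t) volume := by
      refine Integrable.mono' (integrable_const (∫ x, ‖x⁻¹‖ ∂ν))
        hu_anti.measurable.aestronglyMeasurable (ae_of_all _ fun s => ?_)
      rw [Real.norm_of_nonneg (hu_nn s)]; exact hu_bdd s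
    have hp_int : IntegrableOn p (Ioc 0 t) volume := by
      refine Integrable.mono' (integrable_const 1)
        hp_anti.measurable.aestronglyMeasurable (ae_of_all _ fun s => ?_)
      rw [Real.norm_of_nonneg (hp_nn s)]; exact hp_bdd s
    rw [hFdef]
    simp only
    rw [hfix t ht, split, L1, L2, hG]
    rw [← integral_const_mul, ← integral_const_mul, ← integral_add (hu_int.const_mul _) (hp_int.const_mul _)]
  -- K bound
  set K : ℝ := |1-k| * (∫ x, ‖x⁻¹‖ ∂ν) + (1/lam) with hK
  have hK0 : 0 ≤ K := le_trans (abs_nonneg (G 0)) (hG_bdd 0)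
  have hF_mono : Monotone F := fun a b hab =>
    ENNReal.toReal_mono (measure_ne_top ν _) (measure_mono (Iic_subset_Iic.2 hab))
  have hFdiff : ∀ a b : ℝ, 0 ≤ a → a ≤ b → F b - F a = ∫ s in Ioc a b, G s := by
    intro a b ha hab
    have hsplit : ∫ s in Ioc 0 b, G s = (∫ s in Ioc 0 a, G s) + ∫ s in Ioc a b, G s := by
      rw [← Ioc_union_Ioc_eq_Ioc ha hab,
        setIntegral_union (Ioc_disjoint_Ioc_of_le le_rfl) measurableSet_Ioc (hG_int a)
          ((hG_int b).mono_set (Ioc_subset_Ioc_left ha))]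
    rw [hFeq b (ha.trans hab), hFeq a ha, hsplit]
    ring
  have hIoc_bound : ∀ a b : ℝ, a ≤ b → |∫ s in Ioc a b, G s| ≤ K * (b - a) := by
    intro a b hab
    have := norm_setIntegral_le_of_norm_le_const (μ := volume) (s := Ioc a b)
      (f := G) (C := K) (by rw [Real.volume_Ioc]; exact ENNReal.ofReal_lt_top)
      (fun x _ => (Real.norm_eq_abs (G x)).le.trans (hG_bdd x))
    rw [Real.volume_real_Ioc_of_le hab] at this
    exact (Real.norm_eq_abs _) ▸ this
  have hatom : ∀ s : ℝ, ν {s} = 0 := by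
    intro s
    rcases le_or_gt s 0 with hs | hs
    · exact measure_mono_null (by simpa using hs) hν0
    · by_contra hne
      have hpos' : 0 < ν {s} := pos_iff_ne_zero.2 hne
      set m : ℝ := (ν {s}).toReal with hm
      have hm0 : 0 < m := ENNReal.toReal_pos hne (measure_ne_top ν _)
      set ε : ℝ := min (s/2) (m/(2*(K+1))) with hε
      have hε0 : 0 < ε := lt_min (by linarith) (by positivity)
      have hεs : s - ε ∈ Icc (0:ℝ) s := ⟨by
        have : ε ≤ s/2 := min_le_left _ _
        linarith, by linarith⟩
      have key : ν {s} ≤ ENNReal.ofReal (K * ε) := by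
        have h1 : ν {s} ≤ ν (Ioc (s-ε) s) :=
          measure_mono (fun y hy => by simp at hy; simp [hy]; linarith)
        have h2 : (ν (Ioc (s-ε) s)).toReal = F s - F (s-ε) := by
          rw [hFdef]
          simp only
          rw [← ENNReal.toReal_sub_of_le (measure_mono (Iic_subset_Iic.2 (by linarith)))
            (measure_ne_top ν _), ← measure_diff (Iic_subset_Iic.2 (by linarith))
            nullMeasurableSet_Iic (measure_ne_top ν _)]
          congr 1
          rw [Iic_sdiff_Iic]
        have h3 : F s - F (s-ε) ≤ K * ε := by
          rw [hFdiff (s-ε) s hεs.1 (by linarith)]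
          have := hIoc_bound (s-ε) s (by linarith)
          have h4 : s - (s - ε) = ε := by ring
          rw [h4] at this
          exact (le_abs_self _).trans this
        calc ν {s} ≤ ν (Ioc (s-ε) s) := h1
          _ = ENNReal.ofReal ((ν (Ioc (s-ε) s)).toReal) := (ENNReal.ofReal_toReal (measure_ne_top ν _)).symm
          _ ≤ ENNReal.ofReal (K * ε) := ENNReal.ofReal_le_ofReal (h2 ▸ h3)
      have hcontr : K * ε < m := by
        have h5 : ε ≤ m/(2*(K+1)) := min_le_right _ _
        have h6 : K * ε ≤ K * (m/(2*(K+1))) := mul_le_mul_of_nonneg_left h5 hK0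
        have h7 : K * (m/(2*(K+1))) < m := by
          rw [div_eq_mul_inv]
          have : K / (K+1) < 1 := by
            rw [div_lt_one (by linarith)]; linarith
          calc K * (m * (2*(K+1))⁻¹) = (K/(K+1)) * (m/2) := by
                field_simp
            _ < 1 * (m/2) := by
                apply mul_lt_mul_of_pos_right this (by linarith)
            _ < m := by linarith
        exact h6.trans_lt h7
      have : ν {s} < ν {s} := by
        calc ν {s} ≤ ENNReal.ofReal (K * ε) := key
          _ < ENNReal.ofReal m := ENNReal.ofReal_lt_ofReal_iff hm0 |>.2 hcontr
          _ = ν {s} := ENNReal.ofReal_toReal (measure_ne_top ν _)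
      exact absurd this (lt_irrefl _)
  -- continuity
  have hu_cont : Continuous u := cont_tail ν _ measurable_inv hint2 hatom
  have hp_cont : Continuous p := by
    have h1 : Continuous fun s => ∫ x in Ioi s, (1:ℝ) ∂ν :=
      cont_tail ν _ measurable_const (integrable_const 1) hatom
    have h2 : p = fun s => ∫ x in Ioi s, (1:ℝ) ∂ν := by
      funext s
      rw [setIntegral_const, smul_eq_mul, mul_one, measureReal_def, hp]
    rw [h2]
    exact h1
  have hG_cont : Continuous G := by
    rw [hG]
    exact (continuous_const.mul hu_cont).add (continuous_const.mul hp_cont)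
  -- derivative of F
  have hderiv : ∀ s : ℝ, 0 < s → HasDerivAt F (G s) s := by
    intro s hs
    have h1 : HasDerivAt (fun t => ∫ x in (0:ℝ)..t, G x) (G s) s :=
      intervalIntegral.integral_hasDerivAt_right (hG_cont.intervalIntegrable 0 s)
        hG_meas.stronglyMeasurable.stronglyMeasurableAtFilter hG_cont.continuousAt
    refine h1.congr_of_eventuallyEq ?_
    filter_upwards [eventually_gt_nhds hs] with t ht
    rw [hFeq t ht.le, intervalIntegral.integral_of_le ht.le]
  have hG_nn : ∀ s : ℝ, 0 < s → 0 ≤ G s := by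
    intro s hs
    have h1 := hasDerivAt_iff_tendsto_slope.1 (hderiv s hs)
    refine ge_of_tendsto h1 ?_
    filter_upwards [self_mem_nhdsWithin] with t (ht : t ≠ s)
    rcases lt_or_gt_of_ne ht with h | h
    · rw [slope_def_field]
      apply div_nonneg_of_nonpos
      · simpa using hF_mono h.le
      · linarith
    · rw [slope_def_field]
      apply div_nonneg
      · simpa using hF_mono h.le
      · linarith
  -- density representation
  set gnn : ℝ → ℝ≥0 := fun s => if 0 < s then (G s).toNNReal else 0 with hgnn
  have hgnn_meas : Measurable gnn := by
    refine Measurable.ite ?_ hG_meas.real_toNNReal measurable_const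
    exact (measurableSet_Ioi : MeasurableSet (Ioi (0:ℝ)))
  have hgnn_zero : ∀ x : ℝ, x ≤ 0 → (gnn x : ℝ≥0∞) = 0 := by
    intro x hx
    have : ¬ (0 < x) := not_lt.2 hx
    simp [hgnn, this]
  have hrepr : ν = volume.withDensity (fun s => (gnn s : ℝ≥0∞)) := by
    refine Measure.ext_of_Iic ν _ fun a => ?_
    rw [withDensity_apply _ measurableSet_Iic]
    rcases le_or_gt a 0 with ha | ha
    · rw [measure_mono_null (Iic_subset_Iic.2 ha) hν0,
        setLIntegral_congr_fun measurableSet_Iic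
          (fun x (hx : x ≤ a) => hgnn_zero x (hx.trans ha)), lintegral_zero]
    · have hsplit : Iic a = Iic 0 ∪ Ioc 0 a := by
        rw [Iic_union_Ioc_eq_Iic ha.le]
      rw [hsplit, lintegral_union measurableSet_Ioc (by
        rw [Set.disjoint_iff]
        rintro x ⟨(h1 : x ≤ 0), (h2 : 0 < x), _⟩
        exact absurd h2 (not_lt.2 h1))]
      have hz : ∫⁻ x in Iic 0, (gnn x : ℝ≥0∞) = 0 := by
        rw [setLIntegral_congr_fun measurableSet_Iic
          (fun x (hx : x ≤ 0) => hgnn_zero x hx), lintegral_zero]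
      have hmain : ∫⁻ x in Ioc 0 a, (gnn x : ℝ≥0∞) = ν (Iic a) := by
        have hcg : ∀ x : ℝ, x ∈ Ioc 0 a → (gnn x : ℝ≥0∞) = ENNReal.ofReal (G x) := by
          intro x hx
          simp only [hgnn, if_pos hx.1]
          rfl
        rw [setLIntegral_congr_fun measurableSet_Ioc hcg,
          ← ofReal_integral_eq_lintegral_ofReal (hG_int a)
            ((ae_restrict_iff' measurableSet_Ioc).2 (ae_of_all _ fun x hx => hG_nn x hx.1)),
          ← hFeq a ha.le]
        simp only [hFdef]
        exact ENNReal.ofReal_toReal (measure_ne_top ν (Iic a))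
      rw [hz, hmain, zero_add, ← hsplit]
  -- u and p as volume integrals over bounded intervals
  have hu_diff : ∀ a b : ℝ, 0 < a → a ≤ b → u a - u b = ∫ x in a..b, x⁻¹ * G x := by
    intro a b ha hab
    have h1 : u a - u b = ∫ x in Ioc a b, x⁻¹ ∂ν := by
      have h0 : ∫ x in Ioi a, x⁻¹ ∂ν = (∫ x in Ioc a b, x⁻¹ ∂ν) + ∫ x in Ioi b, x⁻¹ ∂ν := by
        rw [← Ioc_union_Ioi_eq_Ioi hab, setIntegral_union Ioc_disjoint_Ioi_same
          measurableSet_Ioi hint2.integrableOn hint2.integrableOn]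
      rw [hu]
      simp only
      linarith
    rw [h1, intervalIntegral.integral_of_le hab, hrepr, restrict_withDensity measurableSet_Ioc,
      integral_withDensity_eq_integral_smul hgnn_meas]
    refine setIntegral_congr_fun measurableSet_Ioc fun x hx => ?_
    simp only [hgnn, if_pos (ha.trans_le hx.1.le : (0:ℝ) < x)]
    rw [NNReal.smul_def, Real.coe_toNNReal _ (hG_nn x (ha.trans_le hx.1.le)), smul_eq_mul]
    ring
  have hp_diff : ∀ a b : ℝ, 0 < a → a ≤ b → p a - p b = ∫ x in a..b, G x := by
    intro a b ha hab
    have h1 : p a - p b = ∫ x in Ioc a b, (1:ℝ) ∂ν := by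
      rw [setIntegral_const, smul_eq_mul, mul_one, measureReal_def, hp]
      simp only
      rw [← ENNReal.toReal_sub_of_le (measure_mono (Ioi_subset_Ioi hab)) (measure_ne_top ν _),
        ← measure_diff (Ioi_subset_Ioi hab) nullMeasurableSet_Ioi (measure_ne_top ν _)]
      congr 1
      rw [Ioi_sdiff_Ioi]
    rw [h1, intervalIntegral.integral_of_le hab, hrepr, restrict_withDensity measurableSet_Ioc,
      integral_withDensity_eq_integral_smul hgnn_meas]
    refine setIntegral_congr_fun measurableSet_Ioc fun x hx => ?_
    simp only [hgnn, if_pos (ha.trans_le hx.1.le : (0:ℝ) < x)]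
    rw [NNReal.smul_def, Real.coe_toNNReal _ (hG_nn x (ha.trans_le hx.1.le)), smul_eq_mul, mul_one]
  -- derivatives of u and p
  have hh_contOn : ContinuousOn (fun x : ℝ => x⁻¹ * G x) (Ioi 0) :=
    (continuousOn_inv₀.mono (fun x (hx : x ∈ Ioi (0:ℝ)) => ne_of_gt hx)).mul hG_cont.continuousOn
  have hu_deriv : ∀ s : ℝ, 0 < s → HasDerivAt u (-(s⁻¹ * G s)) s := by
    intro s hs
    set c := s/2 with hcdef
    have hcs : c < s := by rw [hcdef]; linarith
    have hc0 : 0 < c := by rw [hcdef]; linarith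
    have hsub : uIcc c s ⊆ Ioi 0 := by
      rw [uIcc_of_le hcs.le]
      exact fun x hx => lt_of_lt_of_le hc0 hx.1
    have hII : IntervalIntegrable (fun x : ℝ => x⁻¹ * G x) volume c s :=
      (hh_contOn.mono hsub).intervalIntegrable
    have h1 : HasDerivAt (fun t => ∫ x in c..t, x⁻¹ * G x) (s⁻¹ * G s) s :=
      intervalIntegral.integral_hasDerivAt_right hII
        ((measurable_inv.mul hG_meas).stronglyMeasurable.stronglyMeasurableAtFilter)
        (hh_contOn.continuousAt (Ioi_mem_nhds hs))
    have h2 : HasDerivAt (fun t => u c - ∫ x in c..t, x⁻¹ * G x) (-(s⁻¹ * G s)) s := by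
      simpa using (h1.const_sub (u c))
    refine h2.congr_of_eventuallyEq ?_
    filter_upwards [eventually_gt_nhds hcs] with t ht
    have := hu_diff c t hc0 ht.le
    linarith
  have hp_deriv : ∀ s : ℝ, 0 < s → HasDerivAt p (-(G s)) s := by
    intro s hs
    set c := s/2 with hcdef
    have hcs : c < s := by rw [hcdef]; linarith
    have hc0 : 0 < c := by rw [hcdef]; linarith
    have hsub : uIcc c s ⊆ Ioi 0 := by
      rw [uIcc_of_le hcs.le]
      exact fun x hx => lt_of_lt_of_le hc0 hx.1
    have hII : IntervalIntegrable G volume c s :=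
      (hG_cont.continuousOn.mono hsub).intervalIntegrable
    have h1 : HasDerivAt (fun t => ∫ x in c..t, G x) (G s) s :=
      intervalIntegral.integral_hasDerivAt_right hII
        (hG_meas.stronglyMeasurable.stronglyMeasurableAtFilter)
        hG_cont.continuousAt
    have h2 : HasDerivAt (fun t => p c - ∫ x in c..t, G x) (-(G s)) s := by
      simpa using (h1.const_sub (p c))
    refine h2.congr_of_eventuallyEq ?_
    filter_upwards [eventually_gt_nhds hcs] with t ht
    have := hp_diff c t hc0 ht.le
    linarith
  have hGd : ∀ s : ℝ, 0 < s →
      HasDerivAt G ((1-k) * (-(s⁻¹ * G s)) + (1/lam) * (-(G s))) s := by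
    intro s hs
    have h1 := ((hu_deriv s hs).const_mul (1-k)).add ((hp_deriv s hs).const_mul (1/lam))
    rw [hG]
    exact h1
  -- the auxiliary function H and its vanishing derivative
  set H : ℝ → ℝ := fun s => G s * s ^ ((1:ℝ)-k) * Real.exp (s/lam) with hH
  have hH_deriv : ∀ s : ℝ, 0 < s → HasDerivAt H 0 s := by
    intro s hs
    have hrp : HasDerivAt (fun x : ℝ => x ^ ((1:ℝ)-k)) ((1-k) * s ^ ((1:ℝ)-k-1)) s :=
      Real.hasDerivAt_rpow_const (Or.inl hs.ne')
    have hdiv : HasDerivAt (fun x : ℝ => x/lam) (1/lam) s := by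
      simpa using (hasDerivAt_id s).div_const lam
    have hex : HasDerivAt (fun x : ℝ => Real.exp (x/lam)) (Real.exp (s/lam) * (1/lam)) s :=
      hdiv.exp
    have hmul := ((hGd s hs).mul hrp).mul hex
    have e2 : s⁻¹ * s ^ ((1:ℝ)-k) = s ^ ((1:ℝ)-k-1) := by
      rw [← Real.rpow_neg_one s, ← Real.rpow_add hs]
      congr 1
      ring
    rw [hH]
    refine hmul.congr_deriv ?_
    simp only [Pi.mul_apply]
    rw [← e2]
    ring
  have hH_contOn : ContinuousOn H (Ioi 0) := by
    rw [hH]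
    refine ContinuousOn.mul (ContinuousOn.mul hG_cont.continuousOn ?_) ?_
    · exact fun x hx => (Real.continuousAt_rpow_const x _ (Or.inl (ne_of_gt hx))).continuousWithinAt
    · exact (Real.continuous_exp.comp (continuous_id.div_const lam)).continuousOn
  have hH_const : ∀ s : ℝ, 0 < s → H s = H 1 := by
    intro s hs
    rcases lt_trichotomy s 1 with h | h | h
    · obtain ⟨c, hc, hslope⟩ := exists_hasDerivAt_eq_slope H (fun _ => 0) h
        (hH_contOn.mono (fun x hx => lt_of_lt_of_le hs hx.1))
        (fun x hx => hH_deriv x (hs.trans hx.1))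
      have := hslope.symm
      rw [div_eq_zero_iff] at this
      rcases this with h1 | h1
      · linarith
      · linarith
    · rw [h]
    · obtain ⟨c, hc, hslope⟩ := exists_hasDerivAt_eq_slope H (fun _ => 0) h
        (hH_contOn.mono (fun x hx => lt_of_lt_of_le one_pos hx.1))
        (fun x hx => hH_deriv x (one_pos.trans hx.1))
      have := hslope.symm
      rw [div_eq_zero_iff] at this
      rcases this with h1 | h1
      · linarith
      · linarith
  set C : ℝ := H 1 with hCdef
  have hC0 : 0 ≤ C := by
    rw [hCdef, hH]
    simp only [Real.one_rpow, mul_one]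
    exact mul_nonneg (hG_nn 1 one_pos) (Real.exp_pos _).le
  have hGform : ∀ s : ℝ, 0 < s → G s = C * (s ^ (k-1) * Real.exp (-(s/lam))) := by
    intro s hs
    have h1 := hH_const s hs
    rw [hH] at h1
    simp only at h1
    have hB : s ^ ((1:ℝ)-k) * s ^ (k-1) = 1 := by
      rw [← Real.rpow_add hs]
      norm_num
    have hE : Real.exp (s/lam) * Real.exp (-(s/lam)) = 1 := by
      rw [← Real.exp_add]
      norm_num
    calc G s = G s * (s ^ ((1:ℝ)-k) * s ^ (k-1)) * (Real.exp (s/lam) * Real.exp (-(s/lam))) := by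
          rw [hB, hE]; ring
      _ = (G s * s ^ ((1:ℝ)-k) * Real.exp (s/lam)) * (s ^ (k-1) * Real.exp (-(s/lam))) := by ring
      _ = C * (s ^ (k-1) * Real.exp (-(s/lam))) := by rw [h1]
  -- total mass identification
  set shape : ℝ → ℝ := fun x => x ^ (k-1) * Real.exp (-(x/lam)) with hshape
  have hshape_meas : Measurable shape := by
    apply Measurable.mul
    · refine measurable_of_continuousOn_compl_singleton (0:ℝ) ?_
      exact fun x hx => (Real.continuousAt_rpow_const x _ (Or.inl hx)).continuousWithinAt
    · exact Real.measurable_exp.comp ((measurable_id.div_const lam).neg)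
  set I : ℝ≥0∞ := ∫⁻ x in Ioi 0, ENNReal.ofReal (shape x) with hI
  set C' : ℝ := lam⁻¹ ^ k / Real.Gamma k with hC'
  have hC'0 : 0 ≤ C' := by
    rw [hC']
    apply div_nonneg
    · exact (Real.rpow_pos_of_pos (inv_pos.2 hlam) k).le
    · exact (Real.Gamma_pos_of_pos hk).le
  have h_mass1 : ENNReal.ofReal C * I = 1 := by
    have h0 : (1:ℝ≥0∞) = ν univ := (measure_univ).symm
    rw [hrepr] at h0
    rw [withDensity_apply _ MeasurableSet.univ, Measure.restrict_univ] at h0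
    rw [← lintegral_add_compl (fun x => (gnn x : ℝ≥0∞)) measurableSet_Iic, compl_Iic] at h0
    rw [setLIntegral_congr_fun measurableSet_Iic
      (fun x (hx : x ≤ 0) => hgnn_zero x hx), lintegral_zero, zero_add] at h0
    rw [setLIntegral_congr_fun measurableSet_Ioi
      (fun x (hx : x ∈ Ioi (0:ℝ)) => ?_), lintegral_const_mul _
      (ENNReal.measurable_ofReal.comp hshape_meas)] at h0
    · exact h0.symm
    · show (gnn x : ℝ≥0∞) = ENNReal.ofReal C * ENNReal.ofReal (shape x)
      have h1 : (gnn x : ℝ≥0∞) = ENNReal.ofReal (G x) := by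
        simp only [hgnn, if_pos (mem_Ioi.1 hx)]
        rfl
      rw [h1, hGform x (mem_Ioi.1 hx), ENNReal.ofReal_mul hC0]
  have h_mass2 : ENNReal.ofReal C' * I = 1 := by
    have h0 := lintegral_gammaPDF_eq_one (r := lam⁻¹) hk (inv_pos.2 hlam)
    rw [← lintegral_add_compl (gammaPDF k lam⁻¹) measurableSet_Iio, compl_Iio] at h0
    rw [setLIntegral_congr_fun measurableSet_Iio
      (fun x (hx : x < 0) => gammaPDF_of_neg hx), lintegral_zero, zero_add] at h0
    rw [setLIntegral_congr (Ioi_ae_eq_Ici (a := (0:ℝ))).symm] at h0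
    rw [setLIntegral_congr_fun measurableSet_Ioi
      (fun x (hx : x ∈ Ioi (0:ℝ)) => ?_), lintegral_const_mul _
      (ENNReal.measurable_ofReal.comp hshape_meas)] at h0
    · exact h0
    · show gammaPDF k lam⁻¹ x = ENNReal.ofReal C' * ENNReal.ofReal (shape x)
      rw [gammaPDF_of_nonneg (le_of_lt (mem_Ioi.1 hx)), ← ENNReal.ofReal_mul hC'0]
      congr 1
      rw [hC', hshape]
      simp only
      rw [div_eq_mul_inv x lam, mul_comm x lam⁻¹]
      ring
  have hI_ne0 : I ≠ 0 := by
    intro h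
    rw [h, mul_zero] at h_mass1
    exact one_ne_zero h_mass1.symm
  have hI_netop : I ≠ ⊤ := by
    intro h
    have hC_ne0 : ENNReal.ofReal C ≠ 0 := by
      intro hc
      rw [hc, zero_mul] at h_mass1
      exact one_ne_zero h_mass1.symm
    rw [h, ENNReal.mul_top hC_ne0] at h_mass1
    exact (ENNReal.top_ne_one) h_mass1
  have hCC : ENNReal.ofReal C = ENNReal.ofReal C' :=
    (ENNReal.mul_left_inj hI_ne0 hI_netop).1 (h_mass1.trans h_mass2.symm)
  -- conclusion
  rw [hrepr]
  show volume.withDensity (fun s => (gnn s : ℝ≥0∞)) = gammaMeasure k lam⁻¹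
  rw [gammaMeasure]
  refine withDensity_congr_ae ?_
  have hne : ∀ᵐ x : ℝ ∂volume, x ≠ 0 := by
    rw [ae_iff]
    have : {x : ℝ | ¬ x ≠ 0} = {0} := by
      ext x; simp
    rw [this]
    exact Real.volume_singleton
  filter_upwards [hne] with x hx
  rcases lt_or_gt_of_ne hx with hneg | hpos
  · rw [hgnn_zero x hneg.le, gammaPDF_of_neg hneg]
  · have h1 : (gnn x : ℝ≥0∞) = ENNReal.ofReal (G x) := by
      simp only [hgnn, if_pos hpos]
      rfl
    rw [h1, hGform x hpos, gammaPDF_of_nonneg hpos.le,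
      ENNReal.ofReal_mul hC0, hCC, ← ENNReal.ofReal_mul hC'0]
    congr 1
    rw [hC']
    rw [div_eq_mul_inv x lam, mul_comm x lam⁻¹]
    ring
/-- Converse: if a positive random variable X with finite E[X] and E[1/X] satisfies
F(t) = E[((1-k)/X + 1/λ) min(X,t)] for all t ≥ 0, then X ∼ Gamma(shape k, scale λ). -/
theorem gamma_fixed_point_characterization
    {Ω : Type*} [MeasurableSpace Ω] (μ : Measure Ω) [IsProbabilityMeasure μ]
    (k lam : ℝ) (hk : 0 < k) (hlam : 0 < lam)
    (X : Ω → ℝ) (hX : Measurable X) (hpos : ∀ ω, 0 < X ω)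
    (hintX : Integrable X μ) (hintinv : Integrable (fun ω => (X ω)⁻¹) μ)
    (hfix : ∀ t : ℝ, 0 ≤ t →
      (μ {ω | X ω ≤ t}).toReal =
        ∫ ω, ((1 - k) / X ω + 1 / lam) * min (X ω) t ∂μ) :
    Measure.map X μ = gammaMeasure k lam⁻¹ := by
  set ν := Measure.map X μ with hν
  have : IsProbabilityMeasure ν := Measure.isProbabilityMeasure_map hX.aemeasurable
  have hν0 : ν (Iic 0) = 0 := by
    rw [hν, Measure.map_apply hX measurableSet_Iic]
    have : X ⁻¹' Iic 0 = ∅ := by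
      ext ω; simp [mem_preimage, not_le, hpos ω]
    rw [this, measure_empty]
  refine main_nu ν k lam hk hlam hν0 ?_ ?_ ?_
  · exact (integrable_map_measure measurable_id.aestronglyMeasurable hX.aemeasurable).2 hintX
  · exact (integrable_map_measure measurable_inv.aestronglyMeasurable hX.aemeasurable).2 hintinv
  · intro t ht
    have h1 : ν (Iic t) = μ {ω | X ω ≤ t} := by
      rw [hν, Measure.map_apply hX measurableSet_Iic]; rfl
    have h2 : ∫ x, ((1-k)/x + 1/lam) * min x t ∂ν
        = ∫ ω, ((1 - k) / X ω + 1 / lam) * min (X ω) t ∂μ := by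
      have hm : Measurable fun x : ℝ => ((1-k)/x + 1/lam) * min x t :=
        ((measurable_const.div measurable_id).add measurable_const).mul
          (measurable_id.min measurable_const)
      rw [hν, integral_map hX.aemeasurable hm.aestronglyMeasurable]
    rw [h1, h2]
    exact hfix t ht
end

section
/- For i.i.d. nonnegative random variables X₁, X₂ with continuous CDF F, the departure measure Δ(F) = ∫₀^∞ ( E[((1-k)/X + 1/λ) min(X,t)] − F(t) ) dF(t) equals (1/λ) E[min(X₁, X₂)] + (1-k) E[(X₁/X₂) 1{X₁ < X₂}] − k/2. -/
open MeasureTheory ProbabilityTheory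
open scoped ENNReal

lemma aux_bound (a c x t : ℝ) (hx : 0 < x) (ht : 0 < t) (hc : 0 ≤ c) :
    |(a / x + c) * min x t| ≤ |a| + c * x := by
  have hm0 : 0 < min x t := lt_min hx ht
  have hmx : min x t ≤ x := min_le_left _ _
  have h1 : |(a / x + c) * min x t| ≤ (|a| / x + c) * min x t := by
    rw [abs_mul, abs_of_pos hm0]
    gcongr
    calc |a / x + c| ≤ |a / x| + |c| := abs_add_le _ _
      _ = |a| / x + c := by rw [abs_div, abs_of_pos hx, abs_of_nonneg hc]
  refine h1.trans ?_
  have h2 : (|a| / x + c) * min x t = |a| * (min x t / x) + c * min x t := by ring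
  rw [h2]
  have h3 : |a| * (min x t / x) ≤ |a| * 1 :=
    mul_le_mul_of_nonneg_left ((div_le_one hx).mpr hmx) (abs_nonneg a)
  have h4 : c * min x t ≤ c * x := mul_le_mul_of_nonneg_left hmx hc
  linarith

lemma aux_atom (ν : Measure ℝ) [IsProbabilityMeasure ν]
    (hcont : Continuous fun t => (ν (Set.Iic t)).toReal) (a : ℝ) : ν {a} = 0 := by
  have key : ∀ b < a, (ν {a}).toReal ≤ (ν (Set.Iic a)).toReal - (ν (Set.Iic b)).toReal := by
    intro b hb
    have hdisj : Disjoint {a} (Set.Iic b) := by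
      simp only [Set.disjoint_left, Set.mem_singleton_iff, Set.mem_Iic]
      rintro x rfl
      exact fun h => absurd hb (not_lt.mpr h)
    have h1 : ν {a} + ν (Set.Iic b) ≤ ν (Set.Iic a) := by
      rw [← measure_union hdisj measurableSet_Iic]
      apply measure_mono
      intro x hx
      rcases hx with hx | hx
      · simp only [Set.mem_singleton_iff] at hx; simp [hx]
      · exact le_trans hx hb.le
    have h2 : (ν {a} + ν (Set.Iic b)).toReal ≤ (ν (Set.Iic a)).toReal :=
      ENNReal.toReal_mono (measure_ne_top _ _) h1
    rw [ENNReal.toReal_add (measure_ne_top _ _) (measure_ne_top _ _)] at h2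
    linarith
  have hten : Filter.Tendsto (fun b => (ν (Set.Iic a)).toReal - (ν (Set.Iic b)).toReal)
      (nhdsWithin a (Set.Iio a)) (nhds 0) := by
    have h1 : Filter.Tendsto (fun b => (ν (Set.Iic b)).toReal) (nhdsWithin a (Set.Iio a))
        (nhds ((ν (Set.Iic a)).toReal)) := (hcont.tendsto a).mono_left nhdsWithin_le_nhds
    simpa using (tendsto_const_nhds (x := (ν (Set.Iic a)).toReal)
      (f := nhdsWithin a (Set.Iio a))).sub h1
  have hle : (ν {a}).toReal ≤ 0 := by
    refine ge_of_tendsto hten ?_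
    filter_upwards [self_mem_nhdsWithin] with b hb
    exact key b hb
  have : (ν {a}).toReal = 0 := le_antisymm hle ENNReal.toReal_nonneg
  rcases (ENNReal.toReal_eq_zero_iff _).mp this with h | h
  · exact h
  · exact absurd h (measure_ne_top _ _)

lemma aux_half (ν : Measure ℝ) [IsProbabilityMeasure ν] (hatom : ∀ a : ℝ, ν {a} = 0) :
    (ν.prod ν) {p : ℝ × ℝ | p.2 ≤ p.1} = 1/2 := by
  have hA : MeasurableSet {p : ℝ × ℝ | p.1 ≤ p.2} := measurableSet_le measurable_fst measurable_snd
  have hA' : MeasurableSet {p : ℝ × ℝ | p.2 ≤ p.1} := measurableSet_le measurable_snd measurable_fst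
  have hdiag : (ν.prod ν) {p : ℝ × ℝ | p.1 = p.2} = 0 := by
    have hD : MeasurableSet {p : ℝ × ℝ | p.1 = p.2} :=
      measurableSet_eq_fun measurable_fst measurable_snd
    rw [Measure.prod_apply hD]
    have hs : ∀ x : ℝ, ν (Prod.mk x ⁻¹' {p : ℝ × ℝ | p.1 = p.2}) = 0 := by
      intro x
      have : (Prod.mk x ⁻¹' {p : ℝ × ℝ | p.1 = p.2}) = {x} := by
        ext y; simp [eq_comm]
      rw [this]; exact hatom x
    simp [hs, hatom]
  have hswap : (ν.prod ν) {p : ℝ × ℝ | p.2 ≤ p.1} = (ν.prod ν) {p : ℝ × ℝ | p.1 ≤ p.2} := by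
    conv_lhs => rw [← Measure.prod_swap]
    rw [Measure.map_apply measurable_swap hA']
    congr 1
  have hsum : (ν.prod ν) {p : ℝ × ℝ | p.1 ≤ p.2} + (ν.prod ν) {p : ℝ × ℝ | p.2 ≤ p.1}
      = 1 + 0 := by
    rw [← measure_union_add_inter _ hA']
    congr 1
    · have : ({p : ℝ × ℝ | p.1 ≤ p.2} ∪ {p : ℝ × ℝ | p.2 ≤ p.1}) = Set.univ := by
        ext p; simp [le_total]
      rw [this, measure_univ]
    · rw [← hdiag]
      congr 1
      ext p; simp [le_antisymm_iff, and_comm]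
  rw [hswap, ← two_mul, add_zero] at hsum
  clear hA
  have h2 : (2 : ℝ≥0∞) ≠ 0 := two_ne_zero
  have h2' : (2 : ℝ≥0∞) ≠ ⊤ := ENNReal.ofNat_ne_top
  rw [hswap, ENNReal.eq_div_iff h2 h2']
  exact hsum

/-- The departure measure Δ(F) = ∫₀^∞ (E[((1-k)/X + 1/λ) min(X,t)] − F(t)) dF(t) equals
(1/λ) E[min(X₁,X₂)] + (1-k) E[(X₁/X₂) 1{X₁<X₂}] − k/2. -/
theorem departure_measure_formula
    {Ω : Type*} [MeasurableSpace Ω] (μ : Measure Ω) [IsProbabilityMeasure μ]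
    (k lam : ℝ) (hk : 0 < k) (hlam : 0 < lam)
    (X₁ X₂ : Ω → ℝ) (hX₁ : Measurable X₁) (hX₂ : Measurable X₂)
    (hpos₁ : ∀ ω, 0 < X₁ ω) (hpos₂ : ∀ ω, 0 < X₂ ω)
    (hindep : IndepFun X₁ X₂ μ) (hident : IdentDistrib X₁ X₂ μ μ)
    (hcont : Continuous fun t => (μ {ω | X₁ ω ≤ t}).toReal)
    (hint : Integrable X₁ μ) (hintinv : Integrable (fun ω => (X₁ ω)⁻¹) μ) :
    ∫ t in Set.Ioi (0:ℝ),
        ((∫ ω, ((1 - k) / X₁ ω + 1 / lam) * min (X₁ ω) t ∂μ)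
          - (μ {ω | X₁ ω ≤ t}).toReal) ∂(Measure.map X₁ μ) =
      (1 / lam) * (∫ ω, min (X₁ ω) (X₂ ω) ∂μ)
        + (1 - k) * (∫ ω, (if X₁ ω < X₂ ω then X₁ ω / X₂ ω else 0) ∂μ)
        - k / 2 := by
  set ν : Measure ℝ := Measure.map X₁ μ with hνdef
  have hprob : IsProbabilityMeasure ν := Measure.isProbabilityMeasure_map hX₁.aemeasurable
  have hIic : ∀ t : ℝ, μ {ω | X₁ ω ≤ t} = ν (Set.Iic t) := fun t =>
    (Measure.map_apply hX₁ measurableSet_Iic).symm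
  have hFcont : Continuous fun t => (ν (Set.Iic t)).toReal := by
    simp only [← hIic]; exact hcont
  have hatom : ∀ a : ℝ, ν {a} = 0 := aux_atom ν hFcont
  have hhalf : (ν.prod ν) {p : ℝ × ℝ | p.2 ≤ p.1} = 1/2 := aux_half ν hatom
  have hA' : MeasurableSet {p : ℝ × ℝ | p.2 ≤ p.1} := measurableSet_le measurable_snd measurable_fst
  have hm : μ.map (fun ω => (X₁ ω, X₂ ω)) = ν.prod ν := by
    rw [(indepFun_iff_map_prod_eq_prod_map_map hX₁.aemeasurable hX₂.aemeasurable).mp hindep,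
      ← hident.map_eq]
  -- a.e. positivity
  have hae : ∀ᵐ t ∂ν, t ∈ Set.Ioi (0:ℝ) := by
    rw [ae_iff]
    have : {t : ℝ | ¬ t ∈ Set.Ioi (0:ℝ)} = Set.Iic 0 := by ext t; simp
    rw [this, ← hIic 0]
    have : {ω | X₁ ω ≤ (0:ℝ)} = ∅ := by
      ext ω; simp [not_le.mpr (hpos₁ ω)]
    simp [this]
  have hrestrict : ν.restrict (Set.Ioi (0:ℝ)) = ν := Measure.restrict_eq_self_of_ae_mem hae
  -- the CDF part
  have hFint : Integrable (fun t => (ν (Set.Iic t)).toReal) ν := by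
    refine Integrable.mono' (integrable_const (1:ℝ)) hFcont.aestronglyMeasurable ?_
    filter_upwards with t
    rw [Real.norm_eq_abs, abs_of_nonneg ENNReal.toReal_nonneg]
    exact (ENNReal.toReal_le_toReal (measure_ne_top _ _) ENNReal.one_ne_top).mpr prob_le_one
      |>.trans_eq ENNReal.toReal_one
  have hFhalf : ∫ t, (ν (Set.Iic t)).toReal ∂ν = 1/2 := by
    have hmono : Monotone fun t : ℝ => ν (Set.Iic t) := fun a b h =>
      measure_mono (Set.Iic_subset_Iic.mpr h)
    rw [integral_toReal hmono.measurable.aemeasurable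
      (Filter.Eventually.of_forall fun t => measure_lt_top _ _)]
    have hl : ∫⁻ t, ν (Set.Iic t) ∂ν = (ν.prod ν) {p : ℝ × ℝ | p.2 ≤ p.1} := by
      rw [Measure.prod_apply hA']
      congr 1
    rw [hl, hhalf]
    simp [ENNReal.toReal_div]
  -- the g part
  set g : ℝ → ℝ := fun t => ∫ ω, ((1 - k) / X₁ ω + 1 / lam) * min (X₁ ω) t ∂μ with hgdef
  have hiA : ∀ t : ℝ, Integrable (fun ω => min (X₁ ω) t / X₁ ω) μ := by
    intro t
    refine Integrable.mono' ((integrable_const (1:ℝ)).add (hintinv.const_mul |t|))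
      ((hX₁.min measurable_const).div hX₁).aestronglyMeasurable ?_
    filter_upwards with ω
    simp only [Pi.add_apply]
    have hx := hpos₁ ω
    have hxinv : 0 < (X₁ ω)⁻¹ := inv_pos.mpr hx
    rw [Real.norm_eq_abs]
    rcases le_or_gt (X₁ ω) t with h | h
    · rw [min_eq_left h, div_self hx.ne']
      have : 0 ≤ |t| * (X₁ ω)⁻¹ := by positivity
      rw [abs_one]
      linarith
    · rw [min_eq_right h.le, abs_div, abs_of_pos hx, div_eq_mul_inv]
      nlinarith
  have hiB : ∀ t : ℝ, Integrable (fun ω => min (X₁ ω) t) μ := by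
    intro t
    refine Integrable.mono' (hint.abs.add (integrable_const |t|))
      (hX₁.min measurable_const).aestronglyMeasurable ?_
    filter_upwards with ω
    simp only [Pi.add_apply]
    rw [Real.norm_eq_abs]
    rcases min_choice (X₁ ω) t with h | h <;> rw [h]
    · linarith [abs_nonneg t, le_abs_self (X₁ ω), abs_nonneg (X₁ ω), neg_abs_le (X₁ ω)]
    · linarith [abs_nonneg (X₁ ω), le_abs_self t, neg_abs_le t]
  have hsplit : ∀ t : ℝ, g t = (1 - k) * (∫ ω, min (X₁ ω) t / X₁ ω ∂μ)
      + (1 / lam) * (∫ ω, min (X₁ ω) t ∂μ) := by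
    intro t
    have hptw : ∀ ω, ((1 - k) / X₁ ω + 1 / lam) * min (X₁ ω) t
        = (1 - k) * (min (X₁ ω) t / X₁ ω) + (1 / lam) * min (X₁ ω) t := fun ω => by ring
    rw [hgdef]
    simp only [hptw]
    rw [integral_add ((hiA t).const_mul _) ((hiB t).const_mul _),
      integral_const_mul, integral_const_mul]
  have hAmono : Monotone fun t => ∫ ω, min (X₁ ω) t / X₁ ω ∂μ := by
    intro a b h
    refine integral_mono (hiA a) (hiA b) fun ω => ?_
    have hx := hpos₁ ω
    exact div_le_div_of_nonneg_right (min_le_min le_rfl h) hx.le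
  have hBmono : Monotone fun t => ∫ ω, min (X₁ ω) t ∂μ := fun a b h =>
    integral_mono (hiB a) (hiB b) fun ω => min_le_min le_rfl h
  have hgmeas : Measurable g := by
    have heq : g = fun t => (1 - k) * (∫ ω, min (X₁ ω) t / X₁ ω ∂μ)
        + (1 / lam) * (∫ ω, min (X₁ ω) t ∂μ) := funext hsplit
    rw [heq]
    exact (hAmono.measurable.const_mul _).add (hBmono.measurable.const_mul _)
  have hgint : Integrable g ν := by
    refine Integrable.mono' (integrable_const (|1 - k| + (1 / lam) * ∫ ω, X₁ ω ∂μ))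
      hgmeas.aestronglyMeasurable ?_
    filter_upwards [hae] with t ht
    have ht0 : (0:ℝ) < t := ht
    rw [hsplit t, Real.norm_eq_abs]
    have hA0 : 0 ≤ ∫ ω, min (X₁ ω) t / X₁ ω ∂μ :=
      integral_nonneg fun ω => div_nonneg (le_min (hpos₁ ω).le ht0.le) (hpos₁ ω).le
    have hA1 : (∫ ω, min (X₁ ω) t / X₁ ω ∂μ) ≤ 1 := by
      calc (∫ ω, min (X₁ ω) t / X₁ ω ∂μ) ≤ ∫ _ω, (1:ℝ) ∂μ :=
            integral_mono (hiA t) (integrable_const 1) fun ω =>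
              (div_le_one (hpos₁ ω)).mpr (min_le_left _ _)
        _ = 1 := by simp
    have hB0 : 0 ≤ ∫ ω, min (X₁ ω) t ∂μ :=
      integral_nonneg fun ω => le_min (hpos₁ ω).le ht0.le
    have hB1 : (∫ ω, min (X₁ ω) t ∂μ) ≤ ∫ ω, X₁ ω ∂μ :=
      integral_mono (hiB t) hint fun ω => min_le_left _ _
    have hlam' : (0:ℝ) < 1 / lam := by positivity
    calc |(1 - k) * (∫ ω, min (X₁ ω) t / X₁ ω ∂μ) + 1 / lam * ∫ ω, min (X₁ ω) t ∂μ|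
        ≤ |(1 - k) * (∫ ω, min (X₁ ω) t / X₁ ω ∂μ)| + |1 / lam * ∫ ω, min (X₁ ω) t ∂μ| :=
          abs_add_le _ _
      _ ≤ |1 - k| + 1 / lam * ∫ ω, X₁ ω ∂μ := by
          rw [abs_mul, abs_mul, abs_of_nonneg hA0, abs_of_nonneg hB0, abs_of_pos hlam']
          have h1 : |1 - k| * (∫ ω, min (X₁ ω) t / X₁ ω ∂μ) ≤ |1 - k| * 1 :=
            mul_le_mul_of_nonneg_left hA1 (abs_nonneg _)
          have h2 : 1 / lam * (∫ ω, min (X₁ ω) t ∂μ) ≤ 1 / lam * ∫ ω, X₁ ω ∂μ :=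
            mul_le_mul_of_nonneg_left hB1 hlam'.le
          linarith
  have hgval : ∫ t, g t ∂ν = (1 / lam) * (∫ ω, min (X₁ ω) (X₂ ω) ∂μ)
      + (1 - k) * (∫ ω, (if X₁ ω < X₂ ω then X₁ ω / X₂ ω else 0) ∂μ) + (1 - k) * (1/2) := by
    have hφm : ∀ t : ℝ, Measurable fun x : ℝ => ((1 - k) / x + 1 / lam) * min x t := fun t =>
      ((measurable_const.div measurable_id).add measurable_const).mul
        (measurable_id.min measurable_const)
    have hrep : ∀ t : ℝ, g t = ∫ x, ((1 - k) / x + 1 / lam) * min x t ∂ν := fun t =>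
      (integral_map hX₁.aemeasurable (hφm t).aestronglyMeasurable).symm
    have hf2meas : Measurable fun p : ℝ × ℝ => ((1 - k) / p.2 + 1 / lam) * min p.2 p.1 :=
      ((measurable_const.div measurable_snd).add measurable_const).mul
        (measurable_snd.min measurable_fst)
    have hX₂int : Integrable X₂ μ := hident.integrable_iff.mp hint
    have hcomp_int : Integrable (fun ω => ((1 - k) / X₂ ω + 1 / lam) * min (X₂ ω) (X₁ ω)) μ := by
      refine Integrable.mono' ((integrable_const |1 - k|).add (hX₂int.const_mul (1 / lam)))
        (((measurable_const.div hX₂).add measurable_const).mul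
          (hX₂.min hX₁)).aestronglyMeasurable ?_
      filter_upwards with ω
      simp only [Pi.add_apply]
      rw [Real.norm_eq_abs]
      exact aux_bound (1 - k) (1 / lam) (X₂ ω) (X₁ ω) (hpos₂ ω) (hpos₁ ω) (by positivity)
    have hf2int : Integrable (fun p : ℝ × ℝ => ((1 - k) / p.2 + 1 / lam) * min p.2 p.1)
        (ν.prod ν) := by
      rw [← hm, integrable_map_measure hf2meas.aestronglyMeasurable
        (hX₁.prodMk hX₂).aemeasurable]
      exact hcomp_int
    have hprodval : ∫ t, g t ∂ν = ∫ ω, ((1 - k) / X₂ ω + 1 / lam) * min (X₂ ω) (X₁ ω) ∂μ := by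
      calc ∫ t, g t ∂ν
          = ∫ t, ∫ x, ((1 - k) / x + 1 / lam) * min x t ∂ν ∂ν := by
            exact integral_congr_ae (Filter.Eventually.of_forall hrep)
        _ = ∫ p : ℝ × ℝ, ((1 - k) / p.2 + 1 / lam) * min p.2 p.1 ∂(ν.prod ν) := by
            have h1 : Integrable
                (Function.uncurry fun t x => ((1 - k) / x + 1 / lam) * min x t)
                (ν.prod ν) := hf2int
            exact integral_integral h1
        _ = ∫ ω, ((1 - k) / X₂ ω + 1 / lam) * min (X₂ ω) (X₁ ω) ∂μ := by
            rw [← hm, integral_map (hX₁.prodMk hX₂).aemeasurable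
              hf2meas.aestronglyMeasurable]
    have hdecomp : ∀ ω, ((1 - k) / X₂ ω + 1 / lam) * min (X₂ ω) (X₁ ω)
        = (1 / lam) * min (X₁ ω) (X₂ ω)
          + ((1 - k) * (if X₁ ω < X₂ ω then X₁ ω / X₂ ω else 0)
            + (1 - k) * (if X₁ ω < X₂ ω then (0:ℝ) else 1)) := by
      intro ω
      have hx2 : X₂ ω ≠ 0 := (hpos₂ ω).ne'
      rcases lt_or_ge (X₁ ω) (X₂ ω) with h | h
      · rw [min_eq_right h.le, min_eq_left h.le, if_pos h, if_pos h]
        field_simp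
        ring
      · rw [min_eq_left h, min_eq_right h, if_neg (not_lt.mpr h), if_neg (not_lt.mpr h)]
        field_simp
        ring
    have hmin_int : Integrable (fun ω => min (X₁ ω) (X₂ ω)) μ := by
      refine Integrable.mono' hint (hX₁.min hX₂).aestronglyMeasurable ?_
      filter_upwards with ω
      rw [Real.norm_eq_abs, abs_of_pos (lt_min (hpos₁ ω) (hpos₂ ω))]
      exact min_le_left _ _
    have hratio_int : Integrable (fun ω => if X₁ ω < X₂ ω then X₁ ω / X₂ ω else 0) μ := by
      refine Integrable.mono' (integrable_const (1:ℝ))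
        (Measurable.ite (measurableSet_lt hX₁ hX₂) (hX₁.div hX₂)
          measurable_const).aestronglyMeasurable ?_
      filter_upwards with ω
      rw [Real.norm_eq_abs]
      split_ifs with h
      · rw [abs_of_nonneg (div_nonneg (hpos₁ ω).le (hpos₂ ω).le)]
        exact (div_le_one (hpos₂ ω)).mpr h.le
      · simp
    have hind_int : Integrable (fun ω => if X₁ ω < X₂ ω then (0:ℝ) else 1) μ := by
      refine Integrable.mono' (integrable_const (1:ℝ))
        (Measurable.ite (measurableSet_lt hX₁ hX₂) measurable_const
          measurable_const).aestronglyMeasurable ?_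
      filter_upwards with ω
      rw [Real.norm_eq_abs]
      split_ifs <;> simp
    have hind_val : ∫ ω, (if X₁ ω < X₂ ω then (0:ℝ) else 1) ∂μ = 1/2 := by
      have heq : (fun ω => if X₁ ω < X₂ ω then (0:ℝ) else 1)
          = Set.indicator {ω | X₂ ω ≤ X₁ ω} (1 : Ω → ℝ) := by
        funext ω
        simp only [Set.indicator_apply, Set.mem_setOf_eq, Pi.one_apply]
        by_cases h : X₁ ω < X₂ ω
        · rw [if_pos h, if_neg (not_le.mpr h)]
        · rw [if_neg h, if_pos (not_lt.mp h)]
      rw [heq, integral_indicator_one (measurableSet_le hX₂ hX₁)]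
      have hμval : μ {ω | X₂ ω ≤ X₁ ω} = 1/2 := by
        have hmap := Measure.map_apply (μ := μ) (hX₁.prodMk hX₂) hA'
        rw [hm] at hmap
        have hpre : (fun ω => (X₁ ω, X₂ ω)) ⁻¹' {p : ℝ × ℝ | p.2 ≤ p.1}
            = {ω | X₂ ω ≤ X₁ ω} := rfl
        rw [hpre] at hmap
        rw [← hmap, hhalf]
      rw [measureReal_def, hμval]
      simp [ENNReal.toReal_div]
    rw [hprodval]
    calc ∫ ω, ((1 - k) / X₂ ω + 1 / lam) * min (X₂ ω) (X₁ ω) ∂μ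
        = ∫ ω, ((1 / lam) * min (X₁ ω) (X₂ ω)
          + ((1 - k) * (if X₁ ω < X₂ ω then X₁ ω / X₂ ω else 0)
            + (1 - k) * (if X₁ ω < X₂ ω then (0:ℝ) else 1))) ∂μ := by
          exact integral_congr_ae (Filter.Eventually.of_forall hdecomp)
      _ = (1 / lam) * (∫ ω, min (X₁ ω) (X₂ ω) ∂μ)
          + (1 - k) * (∫ ω, (if X₁ ω < X₂ ω then X₁ ω / X₂ ω else 0) ∂μ)
          + (1 - k) * (1/2) := by
          have hadd2 : Integrable (fun ω =>
              (1 - k) * (if X₁ ω < X₂ ω then X₁ ω / X₂ ω else 0)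
              + (1 - k) * (if X₁ ω < X₂ ω then (0:ℝ) else 1)) μ :=
            (hratio_int.const_mul _).add (hind_int.const_mul _)
          rw [integral_add (hmin_int.const_mul _) hadd2,
            integral_add (hratio_int.const_mul _) (hind_int.const_mul _),
            integral_const_mul, integral_const_mul, integral_const_mul, hind_val]
          ring
  calc ∫ t in Set.Ioi (0:ℝ), (g t - (μ {ω | X₁ ω ≤ t}).toReal) ∂ν
      = ∫ t, (g t - (ν (Set.Iic t)).toReal) ∂ν := by
        simp only [hIic]; rw [hrestrict]
    _ = (∫ t, g t ∂ν) - ∫ t, (ν (Set.Iic t)).toReal ∂ν := integral_sub hgint hFint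
    _ = (1 / lam) * (∫ ω, min (X₁ ω) (X₂ ω) ∂μ)
        + (1 - k) * (∫ ω, (if X₁ ω < X₂ ω then X₁ ω / X₂ ω else 0) ∂μ) - k / 2 := by
        rw [hgval, hFhalf]; ring
end

section
/- If X has the gamma distribution with shape k and scale λ, then the departure measure Δ(F) = (1/λ) E[min(X₁, X₂)] + (1-k) E[(X₁/X₂) 1{X₁ < X₂}] − k/2 is zero, where X₁, X₂ are i.i.d. copies of X. -/
open MeasureTheory ProbabilityTheory

namespace GammaDep

open Real Set Filter Topology
open scoped ENNReal NNReal

lemma intOn_aux {a b : ℝ} (ha : 0 < a) (hb : 0 < b) :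
    IntegrableOn (fun x : ℝ => x ^ (a - 1) * Real.exp (-(b * x))) (Set.Ioi 0) := by
  have h := integrableOn_rpow_mul_exp_neg_mul_rpow (p := 1) (s := a - 1) (b := b)
    (by linarith) one_pos hb
  refine IntegrableOn.congr_fun h (fun x hx => ?_) measurableSet_Ioi
  rw [Real.rpow_one, neg_mul]

lemma pdf_eq {k r x : ℝ} (hx : 0 ≤ x) :
    gammaPDFReal k r x = r ^ k / Real.Gamma k * x ^ (k - 1) * Real.exp (-(r * x)) :=
  if_pos hx

lemma pdf_neg {k r x : ℝ} (hx : x < 0) : gammaPDFReal k r x = 0 :=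
  if_neg (not_le.mpr hx)

lemma helper_glob {w : ℝ → ℝ} (hw : ∀ x < (0:ℝ), w x = 0)
    (h : IntegrableOn w (Set.Ioi 0)) : Integrable w := by
  rw [← integrableOn_univ, ← Set.Iic_union_Ioi (a := (0:ℝ)), integrableOn_union]
  refine ⟨(integrable_zero _ _ _).congr ?_, h⟩
  rw [EventuallyEq, ae_restrict_iff' measurableSet_Iic]
  have h0 : {x : ℝ | ¬ (x ∈ Set.Iic (0:ℝ) → (0:ℝ) = w x)} ⊆ {0} := by
    intro x hx
    simp only [Set.mem_setOf_eq, not_forall] at hx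
    obtain ⟨hx1, hx2⟩ := hx
    rcases lt_or_eq_of_le (show x ≤ 0 from hx1) with h' | h'
    · exact absurd (hw x h').symm hx2
    · exact Set.mem_singleton_iff.mpr h'
  exact (ae_iff).2 (measure_mono_null h0 (measure_singleton 0))

lemma helper_restrict {w : ℝ → ℝ} (hw : ∀ x < (0:ℝ), w x = 0) :
    ∫ x, w x = ∫ x in Set.Ioi 0, w x := by
  refine (setIntegral_eq_integral_of_ae_compl_eq_zero ?_).symm
  have h0 : {x : ℝ | ¬ (x ∉ Set.Ioi (0:ℝ) → w x = 0)} ⊆ {0} := by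
    intro x hx
    simp only [Set.mem_setOf_eq, not_forall, Set.mem_Ioi, not_lt] at hx
    obtain ⟨hx1, hx2⟩ := hx
    rcases lt_or_eq_of_le hx1 with h' | h'
    · exact absurd (hw x h') hx2
    · exact Set.mem_singleton_iff.mpr h'
  exact (ae_iff).2 (measure_mono_null h0 (measure_singleton 0))

lemma pdf_intOn {k r : ℝ} (hk : 0 < k) (hr : 0 < r) :
    IntegrableOn (gammaPDFReal k r) (Set.Ioi 0) := by
  have := (intOn_aux hk hr).const_mul (r ^ k / Real.Gamma k)
  refine IntegrableOn.congr_fun this (fun x hx => ?_) measurableSet_Ioi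
  rw [pdf_eq (le_of_lt hx)]; ring

lemma pdf_int {k r : ℝ} (hk : 0 < k) (hr : 0 < r) : Integrable (gammaPDFReal k r) :=
  helper_glob (fun x hx => pdf_neg hx) (pdf_intOn hk hr)

lemma xpdf_intOn {k r : ℝ} (hk : 0 < k) (hr : 0 < r) :
    IntegrableOn (fun x => x * gammaPDFReal k r x) (Set.Ioi 0) := by
  have := (intOn_aux (a := k + 1) (b := r) (by linarith) hr).const_mul (r ^ k / Real.Gamma k)
  refine IntegrableOn.congr_fun this (fun x hx => ?_) measurableSet_Ioi
  have hx0 : (0:ℝ) < x := hx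
  rw [pdf_eq hx0.le]
  have hxp : x ^ (k + 1 - 1) = x ^ (k - 1) * x := by
    rw [show k + 1 - 1 = (k-1) + 1 by ring, Real.rpow_add_one hx0.ne']
  rw [hxp]; ring

lemma xpdf_int {k r : ℝ} (hk : 0 < k) (hr : 0 < r) :
    Integrable (fun x => x * gammaPDFReal k r x) :=
  helper_glob (fun x hx => by rw [pdf_neg hx, mul_zero]) (xpdf_intOn hk hr)

lemma xpdfsq_intOn {k r : ℝ} (hk : 0 < k) (hr : 0 < r) :
    IntegrableOn (fun x => x * gammaPDFReal k r x * gammaPDFReal k r x) (Set.Ioi 0) := by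
  have := (intOn_aux (a := 2*k) (b := 2*r) (by linarith) (by linarith)).const_mul
    ((r ^ k / Real.Gamma k)^2)
  refine IntegrableOn.congr_fun this (fun x hx => ?_) measurableSet_Ioi
  have hx0 : (0:ℝ) < x := hx
  rw [pdf_eq hx0.le]
  have h1 : x ^ (2*k - 1) = x * (x ^ (k - 1) * x ^ (k-1)) := by
    rw [← Real.rpow_add hx0, show (2*k-1 : ℝ) = 1 + ((k-1)+(k-1)) by ring,
      Real.rpow_add hx0, Real.rpow_one]
  have h2 : Real.exp (-(2*r*x)) = Real.exp (-(r*x)) * Real.exp (-(r*x)) := by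
    rw [← Real.exp_add]; ring_nf
  rw [h1, h2]; ring

lemma integral_pdf_one {k r : ℝ} (hk : 0 < k) (hr : 0 < r) :
    ∫ x, gammaPDFReal k r x = 1 := by
  have h := lintegral_gammaPDF_eq_one hk hr (a := k) (r := r)
  have h2 : ENNReal.ofReal (∫ x, gammaPDFReal k r x) = ∫⁻ x, gammaPDF k r x := by
    rw [ofReal_integral_eq_lintegral_ofReal (pdf_int hk hr)
      (ae_of_all _ (gammaPDFReal_nonneg hk hr))]
    rfl
  rw [h] at h2
  have := ENNReal.ofReal_eq_one.mp h2
  linarith [this]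


noncomputable def Gf (k r : ℝ) (x : ℝ) : ℝ := ∫ y in Set.Ioi x, gammaPDFReal k r y

lemma Gf_nonneg {k r : ℝ} (hk : 0 < k) (hr : 0 < r) (x : ℝ) : 0 ≤ Gf k r x :=
  setIntegral_nonneg measurableSet_Ioi fun y _ => gammaPDFReal_nonneg hk hr y

lemma Gf_toReal {k r : ℝ} (hk : 0 < k) (hr : 0 < r) (x : ℝ) :
    Gf k r x = (gammaMeasure k r (Set.Ioi x)).toReal := by
  rw [gammaMeasure, withDensity_apply _ measurableSet_Ioi]
  simp_rw [gammaPDF]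
  rw [← ofReal_integral_eq_lintegral_ofReal ((pdf_int hk hr).restrict)
      (ae_of_all _ (gammaPDFReal_nonneg hk hr))]
  exact (ENNReal.toReal_ofReal (Gf_nonneg hk hr x)).symm

lemma Gf_anti {k r : ℝ} (hk : 0 < k) (hr : 0 < r) : Antitone (Gf k r) := by
  intro x y hxy
  rw [Gf_toReal hk hr, Gf_toReal hk hr]
  have : IsProbabilityMeasure (gammaMeasure k r) := isProbabilityMeasure_gammaMeasure hk hr
  exact ENNReal.toReal_le_toReal (measure_ne_top _ _) (measure_ne_top _ _) |>.mpr
    (measure_mono (Set.Ioi_subset_Ioi hxy))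

lemma Gf_meas {k r : ℝ} (hk : 0 < k) (hr : 0 < r) : Measurable (Gf k r) :=
  (Gf_anti hk hr).measurable

lemma Gf_le_one {k r : ℝ} (hk : 0 < k) (hr : 0 < r) (x : ℝ) : Gf k r x ≤ 1 := by
  rw [Gf_toReal hk hr]
  have : IsProbabilityMeasure (gammaMeasure k r) := isProbabilityMeasure_gammaMeasure hk hr
  have h := prob_le_one (μ := gammaMeasure k r) (s := Set.Ioi x)
  have := ENNReal.toReal_le_toReal (measure_ne_top _ _) (by simp) |>.mpr h
  simpa using this

lemma Gf_zero {k r : ℝ} (hk : 0 < k) (hr : 0 < r) : Gf k r 0 = 1 := by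
  rw [Gf, ← helper_restrict (w := gammaPDFReal k r) (fun x hx => if_neg (not_le.mpr hx)), integral_pdf_one hk hr]

lemma Gf_eq_sub {k r : ℝ} (hk : 0 < k) (hr : 0 < r) {x : ℝ} (hx : 0 ≤ x) :
    Gf k r x = 1 - ∫ t in (0:ℝ)..x, gammaPDFReal k r t := by
  rw [intervalIntegral.integral_of_le hx]
  have hsplit : (∫ y in Set.Ioc 0 x, gammaPDFReal k r y) + ∫ y in Set.Ioi x, gammaPDFReal k r y
      = ∫ y in Set.Ioi 0, gammaPDFReal k r y := by
    rw [← setIntegral_union (Set.Ioc_disjoint_Ioi le_rfl) measurableSet_Ioi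
      ((pdf_int hk hr).integrableOn) ((pdf_int hk hr).integrableOn),
      Set.Ioc_union_Ioi_eq_Ioi hx]
  have h1 : ∫ y in Set.Ioi 0, gammaPDFReal k r y = 1 := Gf_zero hk hr
  unfold Gf
  linarith [hsplit, h1]

lemma pdf_contAt {k r : ℝ} {x : ℝ} (hx : 0 < x) : ContinuousAt (gammaPDFReal k r) x := by
  have hψ : ContinuousAt (fun t : ℝ => r ^ k / Real.Gamma k * t ^ (k - 1)
      * Real.exp (-(r * t))) x := by
    exact ((continuousAt_const.mul (Real.continuousAt_rpow_const x (k-1) (Or.inl hx.ne'))).mul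
      ((continuous_exp.comp (continuous_const.mul continuous_id).neg).continuousAt))
  refine hψ.congr ?_
  filter_upwards [Ioi_mem_nhds hx] with t (ht : 0 < t)
  exact (if_pos ht.le).symm

lemma hasDeriv_Gf {k r : ℝ} (hk : 0 < k) (hr : 0 < r) {x : ℝ} (hx : 0 < x) :
    HasDerivAt (Gf k r) (-(gammaPDFReal k r x)) x := by
  have hprim : HasDerivAt (fun t => ∫ s in (0:ℝ)..t, gammaPDFReal k r s)
      (gammaPDFReal k r x) x := by
    refine intervalIntegral.integral_hasDerivAt_right
      ((pdf_int hk hr).intervalIntegrable)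
      ⟨Set.univ, univ_mem, (pdf_int hk hr).aestronglyMeasurable.restrict⟩
      (pdf_contAt hx)
  have h2 : HasDerivAt (fun t => 1 - ∫ s in (0:ℝ)..t, gammaPDFReal k r s)
      (-(gammaPDFReal k r x)) x := by
    have := (hasDerivAt_const x (1:ℝ)).sub hprim; rwa [zero_sub] at this
  refine h2.congr_of_eventuallyEq ?_
  filter_upwards [Ioi_mem_nhds hx] with t (ht : 0 < t)
  exact Gf_eq_sub hk hr ht.le

lemma tendsto_Gf_top {k r : ℝ} (hk : 0 < k) (hr : 0 < r) :
    Tendsto (Gf k r) atTop (𝓝 0) := by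
  have hT : Tendsto (fun x : ℝ => 1 - ∫ t in (0:ℝ)..x, gammaPDFReal k r t) atTop
      (𝓝 (1 - ∫ t in Set.Ioi 0, gammaPDFReal k r t)) :=
    tendsto_const_nhds.sub
      (intervalIntegral_tendsto_integral_Ioi 0 (pdf_intOn hk hr) tendsto_id)
  rw [show (∫ t in Set.Ioi 0, gammaPDFReal k r t) = 1 from Gf_zero hk hr] at hT
  simp only [sub_self] at hT
  refine hT.congr' ?_
  filter_upwards [eventually_ge_atTop (0:ℝ)] with x hx
  exact (Gf_eq_sub hk hr hx).symm

lemma contWithin_Gf_zero {k r : ℝ} (hk : 0 < k) (hr : 0 < r) :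
    ContinuousWithinAt (Gf k r) (Set.Ici 0) 0 := by
  have hc : Continuous (fun x : ℝ => 1 - ∫ t in (0:ℝ)..x, gammaPDFReal k r t) :=
    continuous_const.sub
      (intervalIntegral.continuous_primitive (fun a b => (pdf_int hk hr).intervalIntegrable) 0)
  refine (hc.continuousWithinAt).congr (fun y hy => Gf_eq_sub hk hr hy) ?_
  rw [Gf_eq_sub hk hr le_rfl]


noncomputable def Hf (k r : ℝ) (x : ℝ) : ℝ := ∫ y in Set.Ioi x, gammaPDFReal k r y / y

lemma Hpart_intOn {k r : ℝ} (hk : 0 < k) (hr : 0 < r) {x : ℝ} (hx : 0 < x) :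
    IntegrableOn (fun y => gammaPDFReal k r y / y) (Set.Ioi x) := by
  refine Integrable.mono' (((pdf_int hk hr).restrict (s := Set.Ioi x)).const_mul (1/x))
    (((measurable_gammaPDFReal k r).div measurable_id).aestronglyMeasurable) ?_
  rw [ae_restrict_iff' measurableSet_Ioi]
  refine ae_of_all _ fun y (hy : x < y) => ?_
  have hy0 : 0 < y := hx.trans hy
  have hnn := gammaPDFReal_nonneg hk hr y
  rw [Real.norm_eq_abs, abs_of_nonneg (by positivity)]
  calc gammaPDFReal k r y / y ≤ gammaPDFReal k r y / x := by gcongr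
    _ = 1 / x * gammaPDFReal k r y := by ring

lemma F1 {k r : ℝ} (hk : 0 < k) (hr : 0 < r) {x : ℝ} (hx : 0 < x) :
    (1 - k) * Hf k r x = gammaPDFReal k r x - r * Gf k r x := by
  set C := r ^ k / Real.Gamma k with hC
  have hderiv : ∀ t ∈ Set.Ioi x, HasDerivAt (gammaPDFReal k r)
      ((k - 1) * (gammaPDFReal k r t / t) - r * gammaPDFReal k r t) t := by
    intro t ht
    have ht0 : 0 < t := hx.trans ht
    have h1 : HasDerivAt (fun s : ℝ => s ^ (k - 1)) ((k - 1) * t ^ (k - 1 - 1)) t :=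
      Real.hasDerivAt_rpow_const (Or.inl ht0.ne')
    have hinner : HasDerivAt (fun s : ℝ => -(r * s)) (-r) t := by
      have := ((hasDerivAt_id' t).const_mul r).neg; rwa [mul_one] at this
    have h2 : HasDerivAt (fun s : ℝ => Real.exp (-(r * s)))
        (Real.exp (-(r * t)) * -r) t := (Real.hasDerivAt_exp _).comp t hinner
    have hψ : HasDerivAt (fun s : ℝ => C * s ^ (k - 1) * Real.exp (-(r * s)))
        (C * ((k - 1) * t ^ (k - 1 - 1)) * Real.exp (-(r * t))
          + C * t ^ (k - 1) * (Real.exp (-(r * t)) * -r)) t :=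
      (h1.const_mul C).mul h2
    have heq : C * ((k - 1) * t ^ (k - 1 - 1)) * Real.exp (-(r * t))
          + C * t ^ (k - 1) * (Real.exp (-(r * t)) * -r)
        = (k - 1) * (gammaPDFReal k r t / t) - r * gammaPDFReal k r t := by
      rw [pdf_eq ht0.le, ← hC, Real.rpow_sub_one ht0.ne']
      field_simp
      ring
    rw [heq] at hψ
    refine hψ.congr_of_eventuallyEq ?_
    filter_upwards [Ioi_mem_nhds ht0] with s (hs : 0 < s)
    rw [pdf_eq hs.le]
  have hint : IntegrableOn (fun t => (k - 1) * (gammaPDFReal k r t / t)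
      - r * gammaPDFReal k r t) (Set.Ioi x) :=
    ((Hpart_intOn hk hr hx).const_mul (k-1)).sub (((pdf_int hk hr).restrict).const_mul r)
  have htend : Tendsto (gammaPDFReal k r) atTop (𝓝 0) := by
    have h0 := (tendsto_rpow_mul_exp_neg_mul_atTop_nhds_zero (k-1) r hr).const_mul C
    rw [mul_zero] at h0
    refine h0.congr' ?_
    filter_upwards [eventually_gt_atTop (0:ℝ)] with t ht
    rw [pdf_eq ht.le, neg_mul]
    ring
  have key := integral_Ioi_of_hasDerivAt_of_tendsto
    ((pdf_contAt hx).continuousWithinAt) hderiv hint htend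
  rw [zero_sub] at key
  have hsplit : ∫ t in Set.Ioi x, ((k - 1) * (gammaPDFReal k r t / t)
        - r * gammaPDFReal k r t)
      = (k - 1) * Hf k r x - r * Gf k r x := by
    rw [integral_sub ((Hpart_intOn hk hr hx).const_mul (k-1))
      (((pdf_int hk hr).restrict).const_mul r), integral_const_mul, integral_const_mul]
    rfl
  rw [hsplit] at key
  linarith [key]

lemma fG_intOn {k r : ℝ} (hk : 0 < k) (hr : 0 < r) :
    IntegrableOn (fun x => gammaPDFReal k r x * Gf k r x) (Set.Ioi 0) := by
  refine Integrable.mono' ((pdf_int hk hr).restrict)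
    (((measurable_gammaPDFReal k r).mul (Gf_meas hk hr)).aestronglyMeasurable) ?_
  refine ae_of_all _ fun y => ?_
  have h1 := gammaPDFReal_nonneg hk hr y
  have h2 := Gf_nonneg hk hr y
  have h3 := Gf_le_one hk hr y
  rw [Real.norm_eq_abs, abs_of_nonneg (by positivity)]
  nlinarith

lemma xfG_intOn {k r : ℝ} (hk : 0 < k) (hr : 0 < r) :
    IntegrableOn (fun x => x * gammaPDFReal k r x * Gf k r x) (Set.Ioi 0) := by
  refine Integrable.mono' (xpdf_intOn hk hr)
    (((measurable_id.mul (measurable_gammaPDFReal k r)).mul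
      (Gf_meas hk hr)).aestronglyMeasurable) ?_
  rw [ae_restrict_iff' measurableSet_Ioi]
  refine ae_of_all _ fun y (hy : 0 < y) => ?_
  have h1 := gammaPDFReal_nonneg hk hr y
  have h2 := Gf_nonneg hk hr y
  have h3 := Gf_le_one hk hr y
  rw [Real.norm_eq_abs, abs_of_nonneg (by positivity)]
  have h4 : 0 ≤ y * gammaPDFReal k r y := mul_nonneg hy.le h1
  nlinarith

lemma F3 {k r : ℝ} (hk : 0 < k) (hr : 0 < r) :
    ∫ x in Set.Ioi 0, gammaPDFReal k r x * Gf k r x = 1 / 2 := by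
  set h := fun x => -(Gf k r x) ^ 2 / 2 with hh
  have hderiv : ∀ x ∈ Set.Ioi 0, HasDerivAt h (gammaPDFReal k r x * Gf k r x) x := by
    intro x hx
    have hd := (((hasDeriv_Gf hk hr hx).pow 2).neg).div_const 2
    refine hd.congr_deriv ?_
    ring
  have hcont : ContinuousWithinAt h (Set.Ici 0) 0 :=
    (((contWithin_Gf_zero hk hr).pow 2).neg).div_const 2
  have htend : Tendsto h atTop (𝓝 0) := by
    have := (((tendsto_Gf_top hk hr).pow 2).neg).div_const 2
    simpa using this
  have key := integral_Ioi_of_hasDerivAt_of_tendsto hcont hderiv (fG_intOn hk hr) htend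
  rw [key, hh]
  simp only [Gf_zero hk hr]
  norm_num

lemma F2 {k r : ℝ} (hk : 0 < k) (hr : 0 < r) :
    ∫ x in Set.Ioi 0, (k * (gammaPDFReal k r x * Gf k r x)
      - r * (x * gammaPDFReal k r x * Gf k r x)
      - x * gammaPDFReal k r x * gammaPDFReal k r x) = 0 := by
  set C := r ^ k / Real.Gamma k with hC
  have hCpos : 0 < C := div_pos (Real.rpow_pos_of_pos hr k) (Real.Gamma_pos_of_pos hk)
  set g := fun x => C * (x ^ k * Real.exp (-(r * x))) * Gf k r x with hg
  have hgbound : ∀ x : ℝ, 0 ≤ x → 0 ≤ g x ∧ g x ≤ C * x ^ k := by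
    intro x hx
    have h2 := Gf_nonneg hk hr x
    have h3 := Gf_le_one hk hr x
    have h4 : Real.exp (-(r * x)) ≤ 1 := Real.exp_le_one_iff.mpr (by nlinarith)
    have h5 : (0:ℝ) ≤ x ^ k := Real.rpow_nonneg hx k
    have h6 : 0 < Real.exp (-(r * x)) := Real.exp_pos _
    constructor
    · positivity
    · calc C * (x ^ k * Real.exp (-(r * x))) * Gf k r x
          ≤ C * (x ^ k * 1) * 1 := by
            apply mul_le_mul _ h3 h2 (by positivity)
            apply mul_le_mul_of_nonneg_left _ hCpos.le
            exact mul_le_mul_of_nonneg_left h4 h5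
        _ = C * x ^ k := by ring
  have hg0 : g 0 = 0 := by
    rw [hg]
    simp [Real.zero_rpow hk.ne']
  have hcont : ContinuousWithinAt g (Set.Ici 0) 0 := by
    rw [ContinuousWithinAt, hg0]
    have hb : Tendsto (fun x : ℝ => C * x ^ k) (𝓝[Set.Ici 0] 0) (𝓝 0) := by
      have hc : ContinuousAt (fun x : ℝ => x ^ k) 0 :=
        Real.continuousAt_rpow_const 0 k (Or.inr hk.le)
      have := (hc.continuousWithinAt (s := Set.Ici 0)).tendsto
      rw [Real.zero_rpow hk.ne'] at this
      simpa using this.const_mul C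
    refine squeeze_zero' ?_ ?_ hb
    · filter_upwards [self_mem_nhdsWithin] with x (hx : x ∈ Set.Ici 0)
      exact (hgbound x hx).1
    · filter_upwards [self_mem_nhdsWithin] with x (hx : x ∈ Set.Ici 0)
      exact (hgbound x hx).2
  have htend : Tendsto g atTop (𝓝 0) := by
    have hb : Tendsto (fun x : ℝ => C * (x ^ k * Real.exp (-(r * x)))) atTop (𝓝 0) := by
      have h0 := (tendsto_rpow_mul_exp_neg_mul_atTop_nhds_zero k r hr).const_mul C
      rw [mul_zero] at h0
      refine h0.congr' ?_
      filter_upwards with t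
      rw [neg_mul]
    refine squeeze_zero' ?_ ?_ hb
    · filter_upwards [eventually_ge_atTop (0:ℝ)] with x hx
      exact (hgbound x hx).1
    · filter_upwards [eventually_ge_atTop (0:ℝ)] with x hx
      have h3 := Gf_le_one hk hr x
      have h2 := Gf_nonneg hk hr x
      have h5 : (0:ℝ) ≤ x ^ k := Real.rpow_nonneg hx k
      have h6 : 0 < Real.exp (-(r * x)) := Real.exp_pos _
      calc g x ≤ C * (x ^ k * Real.exp (-(r * x))) * 1 := by
            apply mul_le_mul_of_nonneg_left h3 (by positivity)
        _ = C * (x ^ k * Real.exp (-(r * x))) := by ring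
  have hderiv : ∀ x ∈ Set.Ioi 0, HasDerivAt g
      (k * (gammaPDFReal k r x * Gf k r x)
        - r * (x * gammaPDFReal k r x * Gf k r x)
        - x * gammaPDFReal k r x * gammaPDFReal k r x) x := by
    intro x hx
    have hx0 : (0:ℝ) < x := hx
    have h1 : HasDerivAt (fun s : ℝ => s ^ k) (k * x ^ (k - 1)) x :=
      Real.hasDerivAt_rpow_const (Or.inl hx0.ne')
    have hinner : HasDerivAt (fun s : ℝ => -(r * s)) (-r) x := by
      have := ((hasDerivAt_id' x).const_mul r).neg; rwa [mul_one] at this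
    have h2 : HasDerivAt (fun s : ℝ => Real.exp (-(r * s)))
        (Real.exp (-(r * x)) * -r) x := (Real.hasDerivAt_exp _).comp x hinner
    have hu : HasDerivAt (fun s : ℝ => C * (s ^ k * Real.exp (-(r * s))))
        (C * (k * x ^ (k - 1) * Real.exp (-(r * x))
          + x ^ k * (Real.exp (-(r * x)) * -r))) x := (h1.mul h2).const_mul C
    have hfull := hu.mul (hasDeriv_Gf hk hr hx0)
    have heq : C * (k * x ^ (k - 1) * Real.exp (-(r * x))
          + x ^ k * (Real.exp (-(r * x)) * -r)) * Gf k r x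
          + C * (x ^ k * Real.exp (-(r * x))) * -(gammaPDFReal k r x)
        = k * (gammaPDFReal k r x * Gf k r x)
          - r * (x * gammaPDFReal k r x * Gf k r x)
          - x * gammaPDFReal k r x * gammaPDFReal k r x := by
      have hxk : x ^ k = x ^ (k - 1) * x := by
        rw [← Real.rpow_add_one hx0.ne' (k-1)]
        norm_num
      rw [pdf_eq hx0.le, ← hC, hxk]
      ring
    rw [heq] at hfull
    exact hfull
  have hint : IntegrableOn (fun x => k * (gammaPDFReal k r x * Gf k r x)
      - r * (x * gammaPDFReal k r x * Gf k r x)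
      - x * gammaPDFReal k r x * gammaPDFReal k r x) (Set.Ioi 0) :=
    (((fG_intOn hk hr).const_mul k).sub ((xfG_intOn hk hr).const_mul r)).sub
      (xpdfsq_intOn hk hr)
  have key := integral_Ioi_of_hasDerivAt_of_tendsto hcont hderiv hint htend
  rw [key, hg0, sub_zero]


section Prod

variable {k r : ℝ}

lemma gamma_pdf_coe (k r : ℝ) :
    gammaPDF k r = fun x => ((Real.toNNReal (gammaPDFReal k r x) : ℝ≥0) : ℝ≥0∞) := rfl

lemma gint (hk : 0 < k) (hr : 0 < r) (g : ℝ → ℝ) :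
    ∫ x, g x ∂(gammaMeasure k r) = ∫ x, gammaPDFReal k r x * g x := by
  rw [gammaMeasure, gamma_pdf_coe,
    integral_withDensity_eq_integral_smul ((measurable_gammaPDFReal k r).real_toNNReal) g]
  congr 1
  funext x
  rw [NNReal.smul_def, Real.coe_toNNReal _ (gammaPDFReal_nonneg hk hr x), smul_eq_mul]

lemma gint_restrict (hk : 0 < k) (hr : 0 < r) {s : Set ℝ} (hs : MeasurableSet s) (g : ℝ → ℝ) :
    ∫ x in s, g x ∂(gammaMeasure k r) = ∫ x in s, gammaPDFReal k r x * g x := by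
  rw [gammaMeasure, gamma_pdf_coe, restrict_withDensity hs,
    integral_withDensity_eq_integral_smul ((measurable_gammaPDFReal k r).real_toNNReal) g]
  congr 1
  funext x
  rw [NNReal.smul_def, Real.coe_toNNReal _ (gammaPDFReal_nonneg hk hr x), smul_eq_mul]

lemma gamma_Iic_zero (hk : 0 < k) (hr : 0 < r) : gammaMeasure k r (Set.Iic 0) = 0 := by
  have h1 : gammaMeasure k r (Set.Iio 0) = 0 := by
    rw [gammaMeasure, withDensity_apply _ measurableSet_Iio]
    exact lintegral_gammaPDF_of_nonpos le_rfl
  have h2 : gammaMeasure k r {(0:ℝ)} = 0 := by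
    rw [gammaMeasure, withDensity_apply _ (measurableSet_singleton 0)]
    exact setLIntegral_measure_zero _ _ (measure_singleton 0)
  have : gammaMeasure k r (Set.Iic 0) ≤ gammaMeasure k r (Set.Iio 0 ∪ {0}) := by
    apply measure_mono
    intro x hx
    rcases lt_or_eq_of_le (show x ≤ (0:ℝ) from hx) with h | h
    · exact Or.inl h
    · exact Or.inr (Set.mem_singleton_iff.mpr h)
  refine le_antisymm (this.trans ?_) zero_le
  calc gammaMeasure k r (Set.Iio 0 ∪ {0}) ≤ _ := measure_union_le _ _
    _ = 0 := by rw [h1, h2, add_zero]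

lemma gamma_singleton_zero (hk : 0 < k) (hr : 0 < r) (a : ℝ) :
    gammaMeasure k r {a} = 0 := by
  rw [gammaMeasure, withDensity_apply _ (measurableSet_singleton a)]
  exact setLIntegral_measure_zero _ _ (measure_singleton a)

lemma gamma_ae_pos (hk : 0 < k) (hr : 0 < r) : ∀ᵐ x ∂(gammaMeasure k r), 0 < x := by
  rw [ae_iff]
  have : {x : ℝ | ¬ 0 < x} = Set.Iic 0 := by ext x; simp
  rw [this]
  exact gamma_Iic_zero hk hr

end Prod

theorem departure_measure_zero_under_gamma
    {Ω : Type*} [MeasurableSpace Ω] (μ : Measure Ω) [IsProbabilityMeasure μ]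
    (k lam : ℝ) (hk : 0 < k) (hlam : 0 < lam)
    (X₁ X₂ : Ω → ℝ) (hX₁ : Measurable X₁) (hX₂ : Measurable X₂)
    (hindep : IndepFun X₁ X₂ μ)
    (hgamma₁ : Measure.map X₁ μ = gammaMeasure k lam⁻¹)
    (hgamma₂ : Measure.map X₂ μ = gammaMeasure k lam⁻¹) :
    (1 / lam) * (∫ ω, min (X₁ ω) (X₂ ω) ∂μ)
      + (1 - k) * (∫ ω, (if X₁ ω < X₂ ω then X₁ ω / X₂ ω else 0) ∂μ)
      - k / 2 = 0 := by
  set r : ℝ := lam⁻¹ with hrdef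
  have hr : 0 < r := inv_pos.mpr hlam
  set γ : Measure ℝ := gammaMeasure k r with hγ
  haveI hPγ : IsProbabilityMeasure γ := isProbabilityMeasure_gammaMeasure hk hr
  set f : ℝ → ℝ := gammaPDFReal k r with hf
  -- map to product measure
  have hmap : μ.map (fun ω => (X₁ ω, X₂ ω)) = γ.prod γ := by
    have h := (indepFun_iff_map_prod_eq_prod_map_map hX₁.aemeasurable
      hX₂.aemeasurable).mp hindep
    rw [hgamma₁, hgamma₂] at h
    exact h
  have hmeas_min : Measurable (fun p : ℝ × ℝ => min p.1 p.2) :=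
    measurable_fst.min measurable_snd
  have hmeas_rat : Measurable (fun p : ℝ × ℝ => if p.1 < p.2 then p.1 / p.2 else 0) :=
    Measurable.ite (measurableSet_lt measurable_fst measurable_snd)
      (measurable_fst.div measurable_snd) measurable_const
  have hE1 : ∫ ω, min (X₁ ω) (X₂ ω) ∂μ = ∫ p, min p.1 p.2 ∂(γ.prod γ) := by
    rw [← hmap, integral_map (hX₁.prodMk hX₂).aemeasurable hmeas_min.aestronglyMeasurable]
  have hE2 : ∫ ω, (if X₁ ω < X₂ ω then X₁ ω / X₂ ω else 0) ∂μ
      = ∫ p, (if p.1 < p.2 then p.1 / p.2 else 0) ∂(γ.prod γ) := by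
    rw [← hmap, integral_map (hX₁.prodMk hX₂).aemeasurable hmeas_rat.aestronglyMeasurable]
  -- integrability of coordinates
  have hid_int : Integrable (fun x : ℝ => x) γ := by
    rw [hγ, gammaMeasure, gamma_pdf_coe,
      integrable_withDensity_iff_integrable_smul ((measurable_gammaPDFReal k r).real_toNNReal)]
    refine helper_glob (fun x hx => ?_) ?_
    · rw [NNReal.smul_def, Real.coe_toNNReal _ (gammaPDFReal_nonneg hk hr x), smul_eq_mul,
        pdf_neg hx, zero_mul]
    · refine IntegrableOn.congr_fun (xpdf_intOn hk hr) (fun x hx => ?_) measurableSet_Ioi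
      rw [NNReal.smul_def, Real.coe_toNNReal _ (gammaPDFReal_nonneg hk hr x), smul_eq_mul,
        mul_comm]
  have hfst_int : Integrable (fun p : ℝ × ℝ => p.1) (γ.prod γ) := by
    have h1 : Integrable (fun x : ℝ => x) (Measure.map Prod.fst (γ.prod γ)) := by
      rw [Measure.map_fst_prod]
      simpa using hid_int
    exact (integrable_map_measure aestronglyMeasurable_id
      measurable_fst.aemeasurable).mp h1
  have hsnd_int : Integrable (fun p : ℝ × ℝ => p.2) (γ.prod γ) := by
    have h1 : Integrable (fun x : ℝ => x) (Measure.map Prod.snd (γ.prod γ)) := by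
      rw [Measure.map_snd_prod]
      simpa using hid_int
    exact (integrable_map_measure aestronglyMeasurable_id
      measurable_snd.aemeasurable).mp h1
  -- diagonal is null
  have hdiag : (γ.prod γ) {p : ℝ × ℝ | p.1 = p.2} = 0 := by
    have hm : MeasurableSet {p : ℝ × ℝ | p.1 = p.2} :=
      measurableSet_eq_fun measurable_fst measurable_snd
    rw [Measure.prod_apply hm]
    have : ∀ x : ℝ, γ (Prod.mk x ⁻¹' {p : ℝ × ℝ | p.1 = p.2}) = 0 := by
      intro x
      have : Prod.mk x ⁻¹' {p : ℝ × ℝ | p.1 = p.2} = {x} := by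
        ext y; simp [eq_comm]
      rw [this, hγ]
      exact gamma_singleton_zero hk hr x
    simp only [this]
    simp
  -- the three pieces
  set s : ℝ × ℝ → ℝ := fun p => if p.1 ≤ p.2 then p.1 else 0 with hs
  set t : ℝ × ℝ → ℝ := fun p => if p.2 < p.1 then p.2 else 0 with ht
  set s' : ℝ × ℝ → ℝ := fun p => if p.1 < p.2 then p.1 else 0 with hs'
  have hs_meas : Measurable s := Measurable.ite
    (measurableSet_le measurable_fst measurable_snd) measurable_fst measurable_const
  have ht_meas : Measurable t := Measurable.ite
    (measurableSet_lt measurable_snd measurable_fst) measurable_snd measurable_const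
  have hs'_meas : Measurable s' := Measurable.ite
    (measurableSet_lt measurable_fst measurable_snd) measurable_fst measurable_const
  have hs_int : Integrable s (γ.prod γ) := by
    refine hfst_int.abs.mono' hs_meas.aestronglyMeasurable (ae_of_all _ fun p => ?_)
    rw [hs]
    dsimp only
    split_ifs
    · simp [Real.norm_eq_abs]
    · simpa using abs_nonneg p.1
  have ht_int : Integrable t (γ.prod γ) := by
    refine hsnd_int.abs.mono' ht_meas.aestronglyMeasurable (ae_of_all _ fun p => ?_)
    rw [ht]
    dsimp only
    split_ifs
    · simp [Real.norm_eq_abs]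
    · simpa using abs_nonneg p.2
  have hs'_int : Integrable s' (γ.prod γ) := by
    refine hfst_int.abs.mono' hs'_meas.aestronglyMeasurable (ae_of_all _ fun p => ?_)
    rw [hs']
    dsimp only
    split_ifs
    · simp [Real.norm_eq_abs]
    · simpa using abs_nonneg p.1
  -- min = s + t
  have hmin_eq : ∫ p, min p.1 p.2 ∂(γ.prod γ) = (∫ p, s p ∂(γ.prod γ)) + ∫ p, t p ∂(γ.prod γ) := by
    rw [← integral_add hs_int ht_int]
    congr 1
    funext p
    rw [hs, ht, min_def]
    dsimp only
    rcases le_or_gt p.1 p.2 with h | h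
    · simp [h, not_lt.mpr h]
    · simp [h, not_le.mpr h]
  -- t integral equals s' integral by swapping
  have ht_swap : ∫ p, t p ∂(γ.prod γ) = ∫ p, s' p ∂(γ.prod γ) := by
    rw [← integral_prod_swap s']
    rfl
  -- s = s' a.e.
  have hs_ae : ∫ p, s p ∂(γ.prod γ) = ∫ p, s' p ∂(γ.prod γ) := by
    refine integral_congr_ae ?_
    rw [Filter.EventuallyEq, ae_iff]
    refine measure_mono_null ?_ hdiag
    intro p hp
    simp only [Set.mem_setOf_eq, hs, hs'] at hp ⊢
    by_contra hne
    rcases lt_trichotomy p.1 p.2 with h | h | h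
    · exact hp (by rw [if_pos h.le, if_pos h])
    · exact hne h
    · exact hp (by rw [if_neg (not_le.mpr h), if_neg (not_lt.mpr h.le)])
  -- Fubini for s'
  have hinner1 : ∀ x : ℝ, (∫ y, (if x < y then x else 0) ∂γ) = x * Gf k r x := by
    intro x
    have hind : (fun y : ℝ => if x < y then x else 0)
        = (Set.Ioi x).indicator (fun _ => x) := by
      funext y; simp [Set.indicator_apply, Set.mem_Ioi]
    rw [hind, integral_indicator measurableSet_Ioi, setIntegral_const,
      Gf_toReal hk hr, smul_eq_mul, mul_comm]
    rfl
  have hA : ∫ p, s' p ∂(γ.prod γ)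
      = ∫ x in Set.Ioi 0, x * gammaPDFReal k r x * Gf k r x := by
    calc ∫ p, s' p ∂(γ.prod γ) = ∫ x, (∫ y, (if x < y then x else 0) ∂γ) ∂γ :=
          integral_prod _ hs'_int
      _ = ∫ x, x * Gf k r x ∂γ := by congr 1; funext x; exact hinner1 x
      _ = ∫ x, gammaPDFReal k r x * (x * Gf k r x) := gint hk hr _
      _ = ∫ x in Set.Ioi 0, gammaPDFReal k r x * (x * Gf k r x) :=
          helper_restrict (fun x hx => by rw [pdf_neg hx, zero_mul])
      _ = ∫ x in Set.Ioi 0, x * gammaPDFReal k r x * Gf k r x := by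
          refine setIntegral_congr_fun measurableSet_Ioi (fun x _ => ?_); ring
  -- the ratio part
  have hfst_pos : ∀ᵐ p ∂(γ.prod γ), 0 < p.1 := by
    rw [ae_iff]
    have hset : {p : ℝ × ℝ | ¬ 0 < p.1} = (Set.Iic 0) ×ˢ (Set.univ : Set ℝ) := by
      ext p; simp
    rw [hset, Measure.prod_prod]
    rw [hγ, gamma_Iic_zero hk hr, zero_mul]
  have hw_int : Integrable (fun p : ℝ × ℝ => if p.1 < p.2 then p.1 / p.2 else 0)
      (γ.prod γ) := by
    refine (integrable_const (1:ℝ)).mono' hmeas_rat.aestronglyMeasurable ?_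
    filter_upwards [hfst_pos] with p hp
    split_ifs with h
    · rw [Real.norm_eq_abs, abs_of_nonneg (le_of_lt (div_pos hp (hp.trans h)))]
      exact (div_le_one (hp.trans h)).mpr h.le
    · simp
  have hrat : ∫ p, (if p.1 < p.2 then p.1 / p.2 else 0) ∂(γ.prod γ)
      = ∫ x in Set.Ioi 0, x * gammaPDFReal k r x * Hf k r x := by
    calc ∫ p, (if p.1 < p.2 then p.1 / p.2 else 0) ∂(γ.prod γ)
        = ∫ x, (∫ y, (if x < y then x / y else 0) ∂γ) ∂γ := integral_prod _ hw_int
      _ = ∫ x, x * Hf k r x ∂γ := by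
          refine integral_congr_ae ?_
          have hae : ∀ᵐ x ∂γ, 0 < x := by rw [hγ]; exact gamma_ae_pos hk hr
          filter_upwards [hae] with x hx
          have hind : (fun y : ℝ => if x < y then x / y else 0)
              = (Set.Ioi x).indicator (fun y => x / y) := by
            funext y; simp [Set.indicator_apply, Set.mem_Ioi]
          rw [hind, integral_indicator measurableSet_Ioi]
          rw [show (∫ y in Set.Ioi x, x / y ∂γ)
              = ∫ y in Set.Ioi x, gammaPDFReal k r y * (x / y) from
            gint_restrict hk hr measurableSet_Ioi _]
          rw [show (fun y => gammaPDFReal k r y * (x / y))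
              = fun y => x * (gammaPDFReal k r y / y) from funext fun y => by ring]
          rw [integral_const_mul]
          rfl
      _ = ∫ x, gammaPDFReal k r x * (x * Hf k r x) := gint hk hr _
      _ = ∫ x in Set.Ioi 0, gammaPDFReal k r x * (x * Hf k r x) :=
          helper_restrict (fun x hx => by rw [pdf_neg hx, zero_mul])
      _ = ∫ x in Set.Ioi 0, x * gammaPDFReal k r x * Hf k r x := by
          refine setIntegral_congr_fun measurableSet_Ioi (fun x _ => ?_); ring
  -- total for min
  have hmin_total : ∫ p, min p.1 p.2 ∂(γ.prod γ)
      = 2 * ∫ x in Set.Ioi 0, x * gammaPDFReal k r x * Gf k r x := by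
    rw [hmin_eq, ht_swap, hs_ae, hA]; ring
  -- final algebra
  set A := ∫ x in Set.Ioi 0, x * gammaPDFReal k r x * Gf k r x with hAdef
  set B := ∫ x in Set.Ioi 0, x * gammaPDFReal k r x * Hf k r x with hBdef
  set Cxx := ∫ x in Set.Ioi 0, x * gammaPDFReal k r x * gammaPDFReal k r x with hCdef
  have hBeq : (1 - k) * B = Cxx - r * A := by
    rw [hBdef, ← integral_const_mul]
    rw [show (∫ x in Set.Ioi 0, (1 - k) * (x * gammaPDFReal k r x * Hf k r x))
        = ∫ x in Set.Ioi 0, (x * gammaPDFReal k r x * gammaPDFReal k r x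
            - r * (x * gammaPDFReal k r x * Gf k r x)) from
      setIntegral_congr_fun measurableSet_Ioi (fun x hx => by
        have h := F1 hk hr (show (0:ℝ) < x from hx)
        calc (1 - k) * (x * gammaPDFReal k r x * Hf k r x)
            = x * gammaPDFReal k r x * ((1 - k) * Hf k r x) := by ring
          _ = x * gammaPDFReal k r x * (gammaPDFReal k r x - r * Gf k r x) := by rw [h]
          _ = x * gammaPDFReal k r x * gammaPDFReal k r x
              - r * (x * gammaPDFReal k r x * Gf k r x) := by ring)]
    rw [integral_sub (xpdfsq_intOn hk hr) ((xfG_intOn hk hr).const_mul r),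
      integral_const_mul]
  have hF2' : r * A + Cxx = k * (1 / 2) := by
    have h2 := F2 hk hr
    have eA := integral_sub (μ := volume.restrict (Set.Ioi 0))
      (((fG_intOn hk hr).const_mul k).sub ((xfG_intOn hk hr).const_mul r))
      (xpdfsq_intOn hk hr)
    simp only [Pi.sub_apply] at eA
    have eB := integral_sub (μ := volume.restrict (Set.Ioi 0))
      ((fG_intOn hk hr).const_mul k) ((xfG_intOn hk hr).const_mul r)
    rw [eA, eB, integral_const_mul, integral_const_mul, F3 hk hr] at h2
    rw [hAdef, hCdef]
    linarith
  have hlam1 : 1 / lam = r := by rw [one_div]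
  rw [hE1, hE2, hmin_total, hrat, hlam1]
  linarith


end GammaDep

open GammaDep Real Set Filter Topology
open scoped ENNReal NNReal

/-- If X₁, X₂ are i.i.d. Gamma(shape k, scale λ), then
(1/λ) E[min(X₁,X₂)] + (1-k) E[(X₁/X₂) 1{X₁<X₂}] − k/2 = 0. -/
theorem departure_measure_zero_under_gamma
    {Ω : Type*} [MeasurableSpace Ω] (μ : Measure Ω) [IsProbabilityMeasure μ]
    (k lam : ℝ) (hk : 0 < k) (hlam : 0 < lam)
    (X₁ X₂ : Ω → ℝ) (hX₁ : Measurable X₁) (hX₂ : Measurable X₂)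
    (hindep : IndepFun X₁ X₂ μ)
    (hgamma₁ : Measure.map X₁ μ = gammaMeasure k lam⁻¹)
    (hgamma₂ : Measure.map X₂ μ = gammaMeasure k lam⁻¹) :
    (1 / lam) * (∫ ω, min (X₁ ω) (X₂ ω) ∂μ)
      + (1 - k) * (∫ ω, (if X₁ ω < X₂ ω then X₁ ω / X₂ ω else 0) ∂μ)
      - k / 2 = 0 := by
  set r : ℝ := lam⁻¹ with hrdef
  have hr : 0 < r := inv_pos.mpr hlam
  set γ : Measure ℝ := gammaMeasure k r with hγ
  haveI hPγ : IsProbabilityMeasure γ := isProbabilityMeasure_gammaMeasure hk hr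
  set f : ℝ → ℝ := gammaPDFReal k r with hf
  -- map to product measure
  have hmap : μ.map (fun ω => (X₁ ω, X₂ ω)) = γ.prod γ := by
    have h := (indepFun_iff_map_prod_eq_prod_map_map hX₁.aemeasurable
      hX₂.aemeasurable).mp hindep
    rw [hgamma₁, hgamma₂] at h
    exact h
  have hmeas_min : Measurable (fun p : ℝ × ℝ => min p.1 p.2) :=
    measurable_fst.min measurable_snd
  have hmeas_rat : Measurable (fun p : ℝ × ℝ => if p.1 < p.2 then p.1 / p.2 else 0) :=
    Measurable.ite (measurableSet_lt measurable_fst measurable_snd)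
      (measurable_fst.div measurable_snd) measurable_const
  have hE1 : ∫ ω, min (X₁ ω) (X₂ ω) ∂μ = ∫ p, min p.1 p.2 ∂(γ.prod γ) := by
    rw [← hmap, integral_map (hX₁.prodMk hX₂).aemeasurable hmeas_min.aestronglyMeasurable]
  have hE2 : ∫ ω, (if X₁ ω < X₂ ω then X₁ ω / X₂ ω else 0) ∂μ
      = ∫ p, (if p.1 < p.2 then p.1 / p.2 else 0) ∂(γ.prod γ) := by
    rw [← hmap, integral_map (hX₁.prodMk hX₂).aemeasurable hmeas_rat.aestronglyMeasurable]
  -- integrability of coordinates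
  have hid_int : Integrable (fun x : ℝ => x) γ := by
    rw [hγ, gammaMeasure, gamma_pdf_coe,
      integrable_withDensity_iff_integrable_smul ((measurable_gammaPDFReal k r).real_toNNReal)]
    refine helper_glob (fun x hx => ?_) ?_
    · rw [NNReal.smul_def, Real.coe_toNNReal _ (gammaPDFReal_nonneg hk hr x), smul_eq_mul,
        pdf_neg hx, zero_mul]
    · refine IntegrableOn.congr_fun (xpdf_intOn hk hr) (fun x hx => ?_) measurableSet_Ioi
      rw [NNReal.smul_def, Real.coe_toNNReal _ (gammaPDFReal_nonneg hk hr x), smul_eq_mul,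
        mul_comm]
  have hfst_int : Integrable (fun p : ℝ × ℝ => p.1) (γ.prod γ) := by
    have h1 : Integrable (fun x : ℝ => x) (Measure.map Prod.fst (γ.prod γ)) := by
      rw [Measure.map_fst_prod]
      simpa using hid_int
    exact (integrable_map_measure aestronglyMeasurable_id
      measurable_fst.aemeasurable).mp h1
  have hsnd_int : Integrable (fun p : ℝ × ℝ => p.2) (γ.prod γ) := by
    have h1 : Integrable (fun x : ℝ => x) (Measure.map Prod.snd (γ.prod γ)) := by
      rw [Measure.map_snd_prod]
      simpa using hid_int
    exact (integrable_map_measure aestronglyMeasurable_id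
      measurable_snd.aemeasurable).mp h1
  -- diagonal is null
  have hdiag : (γ.prod γ) {p : ℝ × ℝ | p.1 = p.2} = 0 := by
    have hm : MeasurableSet {p : ℝ × ℝ | p.1 = p.2} :=
      measurableSet_eq_fun measurable_fst measurable_snd
    rw [Measure.prod_apply hm]
    have : ∀ x : ℝ, γ (Prod.mk x ⁻¹' {p : ℝ × ℝ | p.1 = p.2}) = 0 := by
      intro x
      have : Prod.mk x ⁻¹' {p : ℝ × ℝ | p.1 = p.2} = {x} := by
        ext y; simp [eq_comm]
      rw [this, hγ]
      exact gamma_singleton_zero hk hr x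
    simp only [this]
    simp
  -- the three pieces
  set s : ℝ × ℝ → ℝ := fun p => if p.1 ≤ p.2 then p.1 else 0 with hs
  set t : ℝ × ℝ → ℝ := fun p => if p.2 < p.1 then p.2 else 0 with ht
  set s' : ℝ × ℝ → ℝ := fun p => if p.1 < p.2 then p.1 else 0 with hs'
  have hs_meas : Measurable s := Measurable.ite
    (measurableSet_le measurable_fst measurable_snd) measurable_fst measurable_const
  have ht_meas : Measurable t := Measurable.ite
    (measurableSet_lt measurable_snd measurable_fst) measurable_snd measurable_const
  have hs'_meas : Measurable s' := Measurable.ite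
    (measurableSet_lt measurable_fst measurable_snd) measurable_fst measurable_const
  have hs_int : Integrable s (γ.prod γ) := by
    refine hfst_int.abs.mono' hs_meas.aestronglyMeasurable (ae_of_all _ fun p => ?_)
    rw [hs]
    dsimp only
    split_ifs
    · simp [Real.norm_eq_abs]
    · simpa using abs_nonneg p.1
  have ht_int : Integrable t (γ.prod γ) := by
    refine hsnd_int.abs.mono' ht_meas.aestronglyMeasurable (ae_of_all _ fun p => ?_)
    rw [ht]
    dsimp only
    split_ifs
    · simp [Real.norm_eq_abs]
    · simpa using abs_nonneg p.2
  have hs'_int : Integrable s' (γ.prod γ) := by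
    refine hfst_int.abs.mono' hs'_meas.aestronglyMeasurable (ae_of_all _ fun p => ?_)
    rw [hs']
    dsimp only
    split_ifs
    · simp [Real.norm_eq_abs]
    · simpa using abs_nonneg p.1
  -- min = s + t
  have hmin_eq : ∫ p, min p.1 p.2 ∂(γ.prod γ) = (∫ p, s p ∂(γ.prod γ)) + ∫ p, t p ∂(γ.prod γ) := by
    rw [← integral_add hs_int ht_int]
    congr 1
    funext p
    rw [hs, ht, min_def]
    dsimp only
    rcases le_or_gt p.1 p.2 with h | h
    · simp [h, not_lt.mpr h]
    · simp [h, not_le.mpr h]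
  -- t integral equals s' integral by swapping
  have ht_swap : ∫ p, t p ∂(γ.prod γ) = ∫ p, s' p ∂(γ.prod γ) := by
    rw [← integral_prod_swap s']
    rfl
  -- s = s' a.e.
  have hs_ae : ∫ p, s p ∂(γ.prod γ) = ∫ p, s' p ∂(γ.prod γ) := by
    refine integral_congr_ae ?_
    rw [Filter.EventuallyEq, ae_iff]
    refine measure_mono_null ?_ hdiag
    intro p hp
    simp only [Set.mem_setOf_eq, hs, hs'] at hp ⊢
    by_contra hne
    rcases lt_trichotomy p.1 p.2 with h | h | h
    · exact hp (by rw [if_pos h.le, if_pos h])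
    · exact hne h
    · exact hp (by rw [if_neg (not_le.mpr h), if_neg (not_lt.mpr h.le)])
  -- Fubini for s'
  have hinner1 : ∀ x : ℝ, (∫ y, (if x < y then x else 0) ∂γ) = x * Gf k r x := by
    intro x
    have hind : (fun y : ℝ => if x < y then x else 0)
        = (Set.Ioi x).indicator (fun _ => x) := by
      funext y; simp [Set.indicator_apply, Set.mem_Ioi]
    rw [hind, integral_indicator measurableSet_Ioi, setIntegral_const,
      Gf_toReal hk hr, smul_eq_mul, mul_comm]
    rfl
  have hA : ∫ p, s' p ∂(γ.prod γ)
      = ∫ x in Set.Ioi 0, x * gammaPDFReal k r x * Gf k r x := by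
    calc ∫ p, s' p ∂(γ.prod γ) = ∫ x, (∫ y, (if x < y then x else 0) ∂γ) ∂γ :=
          integral_prod _ hs'_int
      _ = ∫ x, x * Gf k r x ∂γ := by congr 1; funext x; exact hinner1 x
      _ = ∫ x, gammaPDFReal k r x * (x * Gf k r x) := gint hk hr _
      _ = ∫ x in Set.Ioi 0, gammaPDFReal k r x * (x * Gf k r x) :=
          helper_restrict (fun x hx => by rw [pdf_neg hx, zero_mul])
      _ = ∫ x in Set.Ioi 0, x * gammaPDFReal k r x * Gf k r x := by
          refine setIntegral_congr_fun measurableSet_Ioi (fun x _ => ?_); ring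
  -- the ratio part
  have hfst_pos : ∀ᵐ p ∂(γ.prod γ), 0 < p.1 := by
    rw [ae_iff]
    have hset : {p : ℝ × ℝ | ¬ 0 < p.1} = (Set.Iic 0) ×ˢ (Set.univ : Set ℝ) := by
      ext p; simp
    rw [hset, Measure.prod_prod]
    rw [hγ, gamma_Iic_zero hk hr, zero_mul]
  have hw_int : Integrable (fun p : ℝ × ℝ => if p.1 < p.2 then p.1 / p.2 else 0)
      (γ.prod γ) := by
    refine (integrable_const (1:ℝ)).mono' hmeas_rat.aestronglyMeasurable ?_
    filter_upwards [hfst_pos] with p hp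
    split_ifs with h
    · rw [Real.norm_eq_abs, abs_of_nonneg (le_of_lt (div_pos hp (hp.trans h)))]
      exact (div_le_one (hp.trans h)).mpr h.le
    · simp
  have hrat : ∫ p, (if p.1 < p.2 then p.1 / p.2 else 0) ∂(γ.prod γ)
      = ∫ x in Set.Ioi 0, x * gammaPDFReal k r x * Hf k r x := by
    calc ∫ p, (if p.1 < p.2 then p.1 / p.2 else 0) ∂(γ.prod γ)
        = ∫ x, (∫ y, (if x < y then x / y else 0) ∂γ) ∂γ := integral_prod _ hw_int
      _ = ∫ x, x * Hf k r x ∂γ := by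
          refine integral_congr_ae ?_
          have hae : ∀ᵐ x ∂γ, 0 < x := by rw [hγ]; exact gamma_ae_pos hk hr
          filter_upwards [hae] with x hx
          have hind : (fun y : ℝ => if x < y then x / y else 0)
              = (Set.Ioi x).indicator (fun y => x / y) := by
            funext y; simp [Set.indicator_apply, Set.mem_Ioi]
          rw [hind, integral_indicator measurableSet_Ioi]
          rw [show (∫ y in Set.Ioi x, x / y ∂γ)
              = ∫ y in Set.Ioi x, gammaPDFReal k r y * (x / y) from
            gint_restrict hk hr measurableSet_Ioi _]
          rw [show (fun y => gammaPDFReal k r y * (x / y))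
              = fun y => x * (gammaPDFReal k r y / y) from funext fun y => by ring]
          rw [integral_const_mul]
          rfl
      _ = ∫ x, gammaPDFReal k r x * (x * Hf k r x) := gint hk hr _
      _ = ∫ x in Set.Ioi 0, gammaPDFReal k r x * (x * Hf k r x) :=
          helper_restrict (fun x hx => by rw [pdf_neg hx, zero_mul])
      _ = ∫ x in Set.Ioi 0, x * gammaPDFReal k r x * Hf k r x := by
          refine setIntegral_congr_fun measurableSet_Ioi (fun x _ => ?_); ring
  -- total for min
  have hmin_total : ∫ p, min p.1 p.2 ∂(γ.prod γ)
      = 2 * ∫ x in Set.Ioi 0, x * gammaPDFReal k r x * Gf k r x := by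
    rw [hmin_eq, ht_swap, hs_ae, hA]; ring
  -- final algebra
  set A := ∫ x in Set.Ioi 0, x * gammaPDFReal k r x * Gf k r x with hAdef
  set B := ∫ x in Set.Ioi 0, x * gammaPDFReal k r x * Hf k r x with hBdef
  set Cxx := ∫ x in Set.Ioi 0, x * gammaPDFReal k r x * gammaPDFReal k r x with hCdef
  have hBeq : (1 - k) * B = Cxx - r * A := by
    rw [hBdef, ← integral_const_mul]
    rw [show (∫ x in Set.Ioi 0, (1 - k) * (x * gammaPDFReal k r x * Hf k r x))
        = ∫ x in Set.Ioi 0, (x * gammaPDFReal k r x * gammaPDFReal k r x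
            - r * (x * gammaPDFReal k r x * Gf k r x)) from
      setIntegral_congr_fun measurableSet_Ioi (fun x hx => by
        have h := F1 hk hr (show (0:ℝ) < x from hx)
        calc (1 - k) * (x * gammaPDFReal k r x * Hf k r x)
            = x * gammaPDFReal k r x * ((1 - k) * Hf k r x) := by ring
          _ = x * gammaPDFReal k r x * (gammaPDFReal k r x - r * Gf k r x) := by rw [h]
          _ = x * gammaPDFReal k r x * gammaPDFReal k r x
              - r * (x * gammaPDFReal k r x * Gf k r x) := by ring)]
    rw [integral_sub (xpdfsq_intOn hk hr) ((xfG_intOn hk hr).const_mul r),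
      integral_const_mul]
  have hF2' : r * A + Cxx = k * (1 / 2) := by
    have h2 := F2 hk hr
    have eA := integral_sub (μ := volume.restrict (Set.Ioi 0))
      (((fG_intOn hk hr).const_mul k).sub ((xfG_intOn hk hr).const_mul r))
      (xpdfsq_intOn hk hr)
    simp only [Pi.sub_apply] at eA
    have eB := integral_sub (μ := volume.restrict (Set.Ioi 0))
      ((fG_intOn hk hr).const_mul k) ((xfG_intOn hk hr).const_mul r)
    rw [eA, eB, integral_const_mul, integral_const_mul, F3 hk hr] at h2
    rw [hAdef, hCdef]
    linarith
  have hlam1 : 1 / lam = r := by rw [one_div]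
  rw [hE1, hE2, hmin_total, hrat, hlam1]
  linarith
end
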